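/- arXiv:math/0608630 — 7 statements merged into one kernel-verified Lean document; each statement's English description precedes it below -/
import Mathlib

section
/- Let D ≥ 1 and r₁ > r₂ > 1 be integers such that log r₁ / log r₂ is irrational. Let f : (0,∞) → [0,∞) be a nondecreasing function satisfying f(T) ≤ r^D · f(T/r) for every T > 0 and for both r = r₁ and r = r₂. Then the limit θ := lim_{T→∞} f(T)/T^D exists and is finite. -/
open Real Filter Set

lemma natCover (α β δ : ℝ) (hα : 0 < α) (hβ : 0 < β) (hδ : 0 < δ)
    (p q : ℤ) (hp : 0 ≤ p) (hg0 : 0 < p * α + q * β) (hgδ : p * α + q * β < δ) :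
    ∃ x₀ : ℝ, ∀ x ≥ x₀, ∃ m n : ℕ, x ≤ m * α + n * β ∧ m * α + n * β ≤ x + δ := by
  set g : ℝ := p * α + q * β with hg
  set kmax : ℤ := ⌈β / g⌉ with hkmax
  have hkmax0 : 0 ≤ kmax := Int.ceil_nonneg (by positivity)
  refine ⟨β * ((kmax * |q| : ℤ) + 1), fun x hx => ?_⟩
  have hβq : (0:ℝ) ≤ ((kmax * |q| : ℤ) : ℝ) := by
    exact_mod_cast mul_nonneg hkmax0 (abs_nonneg q)
  have hx0 : 0 < x := lt_of_lt_of_le (by push_cast; push_cast at hβq; nlinarith) hx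
  set n : ℤ := ⌊x / β⌋ with hn
  have hnx : (n : ℝ) * β ≤ x := by
    have h1 := Int.floor_le (x / β)
    calc (n:ℝ) * β ≤ (x / β) * β := by nlinarith
    _ = x := by field_simp
  have hxn : x < ((n : ℝ) + 1) * β := by
    have h1 := Int.lt_floor_add_one (x / β)
    calc x = (x / β) * β := by field_simp
    _ < ((n:ℝ) + 1) * β := by nlinarith
  have hnbig : (kmax * |q| : ℤ) + 1 ≤ n := by
    have h1 : (((kmax * |q| : ℤ) : ℝ) + 1 : ℝ) ≤ x / β := by
      rw [le_div_iff₀ hβ]; nlinarith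
    have h2 : ((kmax * |q| + 1 : ℤ) : ℝ) ≤ x / β := by push_cast; push_cast at h1; linarith
    exact Int.le_floor.mpr h2
  set k : ℤ := ⌈(x - n * β) / g⌉ with hk
  have hk0 : 0 ≤ k := Int.ceil_nonneg (div_nonneg (by linarith) hg0.le)
  have hkle : k ≤ kmax := by
    apply Int.ceil_le_ceil
    exact (div_le_div_iff_of_pos_right hg0).mpr (by nlinarith)
  have hkg1 : x - n * β ≤ (k:ℝ) * g := by
    have h1 := Int.le_ceil ((x - n * β) / g)
    calc x - n * β = ((x - n*β)/g) * g := by field_simp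
    _ ≤ (k:ℝ) * g := by nlinarith
  have hkg2 : (k:ℝ) * g < (x - n * β) + g := by
    have h1 := Int.ceil_lt_add_one ((x - n * β) / g)
    calc (k:ℝ) * g < ((x - n*β)/g + 1) * g := by nlinarith
    _ = (x - n*β) + g := by field_simp
  have hcoef : 0 ≤ n + k * q := by
    have h1 : k * |q| ≤ kmax * |q| := mul_le_mul_of_nonneg_right hkle (abs_nonneg q)
    have h2 : k * (-|q|) ≤ k * q := mul_le_mul_of_nonneg_left (neg_abs_le q) hk0
    nlinarith
  have e1 : (((k * p).toNat : ℕ) : ℝ) = (k:ℝ) * p := by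
    have h := Int.toNat_of_nonneg (mul_nonneg hk0 hp)
    calc (((k * p).toNat : ℕ) : ℝ) = (((k * p).toNat : ℤ) : ℝ) := by push_cast; ring
      _ = ((k * p : ℤ) : ℝ) := by rw [h]
      _ = (k:ℝ) * p := by push_cast; ring
  have e2 : (((n + k * q).toNat : ℕ) : ℝ) = (n:ℝ) + k * q := by
    have h := Int.toNat_of_nonneg hcoef
    calc (((n + k * q).toNat : ℕ) : ℝ) = (((n + k * q).toNat : ℤ) : ℝ) := by push_cast; ring
      _ = ((n + k * q : ℤ) : ℝ) := by rw [h]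
      _ = (n:ℝ) + k * q := by push_cast; ring
  refine ⟨(k * p).toNat, (n + k * q).toNat, ?_, ?_⟩
  · rw [e1, e2]; nlinarith
  · rw [e1, e2]; nlinarith

/-- Density of ℕ-combinations of `α` and `β` at infinity, when `α/β` is irrational. -/
lemma keyDensity (α β δ : ℝ) (hα : 0 < α) (hβ : 0 < β) (hirr : Irrational (α / β))
    (hδ : 0 < δ) :
    ∃ x₀ : ℝ, ∀ x ≥ x₀, ∃ m n : ℕ, x ≤ m * α + n * β ∧ m * α + n * β ≤ x + δ := by
  have hdense : Dense ((AddSubgroup.closure ({α, β} : Set ℝ) : AddSubgroup ℝ) : Set ℝ) := by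
    rcases AddSubgroup.dense_or_cyclic (AddSubgroup.closure ({α, β} : Set ℝ)) with h | ⟨a, ha⟩
    · exact h
    · exfalso
      have hαm : α ∈ AddSubgroup.closure ({α, β} : Set ℝ) :=
        AddSubgroup.subset_closure (by simp)
      have hβm : β ∈ AddSubgroup.closure ({α, β} : Set ℝ) :=
        AddSubgroup.subset_closure (by simp)
      rw [ha, AddSubgroup.mem_closure_singleton] at hαm hβm
      obtain ⟨s, hs⟩ := hαm
      obtain ⟨t, ht⟩ := hβm
      rw [zsmul_eq_mul] at hs ht
      have ha0 : a ≠ 0 := by rintro rfl; rw [mul_zero] at ht; linarith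
      have ht0 : (t:ℝ) ≠ 0 := by
        rintro h; rw [h, zero_mul] at ht; linarith
      apply hirr
      refine ⟨(s : ℚ) / t, ?_⟩
      have : α / β = (s:ℝ) / (t:ℝ) := by
        rw [← hs, ← ht]; rw [mul_div_mul_right _ _ ha0]
      rw [this]; push_cast; ring
  obtain ⟨g, hgS, hgI⟩ := hdense.exists_mem_open isOpen_Ioo (Set.nonempty_Ioo.mpr hδ)
  obtain ⟨p, q, hpq⟩ := (AddSubgroup.mem_closure_pair).mp hgS
  rw [zsmul_eq_mul, zsmul_eq_mul] at hpq
  obtain ⟨hg0, hgδ⟩ := hgI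
  rw [← hpq] at hg0 hgδ
  by_cases hp : 0 ≤ p
  · exact natCover α β δ hα hβ hδ p q hp hg0 hgδ
  · push_neg at hp
    have hp1 : p ≤ -1 := by omega
    have hpR : (p:ℝ) ≤ -1 := by exact_mod_cast hp1
    have hq : 0 ≤ q := by
      by_contra hq
      push_neg at hq
      have hqR : (q:ℝ) ≤ 0 := by exact_mod_cast hq.le
      nlinarith
    obtain ⟨x₀, hx₀⟩ := natCover β α δ hβ hα hδ q p hq (by nlinarith) (by nlinarith)
    refine ⟨x₀, fun x hx => ?_⟩
    obtain ⟨m, n, h1, h2⟩ := hx₀ x hx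
    exact ⟨n, m, by linarith, by linarith⟩

/-- Iteration of the scaling inequality. -/
lemma iterScale (D : ℕ) (f : ℝ → ℝ) (c : ℝ) (hc : 0 < c)
    (h : ∀ T : ℝ, 0 < T → f T ≤ c ^ D * f (T / c)) :
    ∀ m : ℕ, ∀ S : ℝ, 0 < S → f (S * c ^ m) ≤ (c ^ m) ^ D * f S := by
  intro m
  induction m with
  | zero => intro S hS; simp
  | succ m ih =>
    intro S hS
    have hT : 0 < S * c ^ (m + 1) := by positivity
    have h1 := h (S * c ^ (m + 1)) hT
    have hdiv : S * c ^ (m + 1) / c = S * c ^ m := by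
      field_simp; ring
    rw [hdiv] at h1
    have h2 := ih S hS
    calc f (S * c ^ (m + 1)) ≤ c ^ D * f (S * c ^ m) := h1
      _ ≤ c ^ D * ((c ^ m) ^ D * f S) := by
          exact mul_le_mul_of_nonneg_left h2 (by positivity)
      _ = (c ^ (m + 1)) ^ D * f S := by ring

/-- Analytic core of Proposition 1. If `f` is nonnegative and nondecreasing on
`(0, ∞)` and satisfies `f T ≤ r ^ D * f (T / r)` for `r = r₁, r₂` with `r₁ > r₂ > 1` integers
such that `log r₁ / log r₂` is irrational, then `f T / T ^ D` has a finite limit as `T → ∞`. -/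
theorem statement0 (D r₁ r₂ : ℕ) (hD : 1 ≤ D) (hr₂ : 1 < r₂) (hr₁₂ : r₂ < r₁)
    (hirr : Irrational (Real.log r₁ / Real.log r₂))
    (f : ℝ → ℝ)
    (hf_nonneg : ∀ T : ℝ, 0 < T → 0 ≤ f T)
    (hf_mono : ∀ s T : ℝ, 0 < s → s ≤ T → f s ≤ f T)
    (hf_sub : ∀ T : ℝ, 0 < T → ∀ r : ℕ, r = r₁ ∨ r = r₂ →
      f T ≤ (r : ℝ) ^ D * f (T / r)) :
    ∃ θ : ℝ, Filter.Tendsto (fun T : ℝ => f T / T ^ D) Filter.atTop (nhds θ) := by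
  have hr₁R : (1:ℝ) < (r₁:ℝ) := by exact_mod_cast lt_trans hr₂ hr₁₂
  have hr₂R : (1:ℝ) < (r₂:ℝ) := by exact_mod_cast hr₂
  set α := Real.log r₁ with hα'
  set β := Real.log r₂ with hβ'
  have hα : 0 < α := Real.log_pos hr₁R
  have hβ : 0 < β := Real.log_pos hr₂R
  -- the candidate limit
  set G : ℝ → ℝ := fun T => f T / T ^ D with hG
  have hGnonneg : ∀ T : ℝ, 0 < T → 0 ≤ G T := fun T hT =>
    div_nonneg (hf_nonneg T hT) (by positivity)
  set Sset : Set ℝ := G '' (Set.Ioi (0:ℝ)) with hSset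
  have hne : Sset.Nonempty := ⟨G 1, 1, by norm_num, rfl⟩
  have hbdd : BddBelow Sset := ⟨0, by rintro y ⟨T, hT, rfl⟩; exact hGnonneg T hT⟩
  set θ := sInf Sset with hθ
  have hθ0 : 0 ≤ θ := le_csInf hne (by rintro y ⟨T, hT, rfl⟩; exact hGnonneg T hT)
  have hlow : ∀ T : ℝ, 0 < T → θ ≤ G T := fun T hT => csInf_le hbdd ⟨T, hT, rfl⟩
  refine ⟨θ, Metric.tendsto_atTop.mpr fun ε hε => ?_⟩
  -- choose S with G S < θ + ε/2
  obtain ⟨y, ⟨S, hSmem, rfl⟩, hy⟩ := exists_lt_of_csInf_lt hne (show θ < θ + ε/2 by linarith)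
  have hS : 0 < S := hSmem
  -- choose δ
  set ρ : ℝ := (θ + ε) / (θ + ε / 2) with hρ
  have hden : 0 < θ + ε / 2 := by linarith
  have hρ1 : 1 < ρ := (one_lt_div hden).mpr (by linarith)
  set δ : ℝ := Real.log ρ / D with hδ'
  have hδ : 0 < δ := div_pos (Real.log_pos hρ1) (by exact_mod_cast hD)
  obtain ⟨x₀, hx₀⟩ := keyDensity α β δ hα hβ hirr hδ
  refine ⟨max (S * Real.exp x₀) 1, fun T hT => ?_⟩
  have hT1 : (1:ℝ) ≤ T := le_trans (le_max_right _ _) hT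
  have hT0 : 0 < T := by linarith
  have hTS : S * Real.exp x₀ ≤ T := le_trans (le_max_left _ _) hT
  have hx : Real.log (T / S) ≥ x₀ := by
    have h1 : Real.exp x₀ ≤ T / S := by
      rw [le_div_iff₀ hS]; linarith [hTS]
    have h2 := Real.log_le_log (Real.exp_pos x₀) h1
    rwa [Real.log_exp] at h2
  obtain ⟨m, n, h1, h2⟩ := hx₀ (Real.log (T / S)) hx
  -- R := r₁^m * r₂^n
  set R : ℝ := (r₁:ℝ) ^ m * (r₂:ℝ) ^ n with hR
  have hr₁0 : (0:ℝ) < r₁ := by linarith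
  have hr₂0 : (0:ℝ) < r₂ := by linarith
  have hR0 : 0 < R := by positivity
  have hRexp : R = Real.exp (m * α + n * β) := by
    rw [Real.exp_add, hα', hβ', Real.exp_nat_mul, Real.exp_nat_mul,
      Real.exp_log hr₁0, Real.exp_log hr₂0]
  have hTS0 : 0 < T / S := by positivity
  have hTSR : T / S ≤ R := by
    rw [hRexp, ← Real.exp_log hTS0]
    exact Real.exp_le_exp.mpr h1
  have hRTS : R ≤ (T / S) * Real.exp δ := by
    rw [hRexp, ← Real.exp_log hTS0, ← Real.exp_add]
    exact Real.exp_le_exp.mpr h2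
  -- f T ≤ R^D * f S
  have hTle : T ≤ S * (r₁:ℝ) ^ m * (r₂:ℝ) ^ n := by
    have := (div_le_iff₀ hS).mp hTSR
    nlinarith
  have hsub₁ : ∀ T' : ℝ, 0 < T' → f T' ≤ (r₁:ℝ) ^ D * f (T' / r₁) := fun T' hT' => by
    have := hf_sub T' hT' r₁ (Or.inl rfl); exact this
  have hsub₂ : ∀ T' : ℝ, 0 < T' → f T' ≤ (r₂:ℝ) ^ D * f (T' / r₂) := fun T' hT' => by
    have := hf_sub T' hT' r₂ (Or.inr rfl); exact this
  have hiter : f (S * (r₁:ℝ) ^ m * (r₂:ℝ) ^ n) ≤ R ^ D * f S := by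
    have step1 := iterScale D f (r₂:ℝ) hr₂0 hsub₂ n (S * (r₁:ℝ) ^ m) (by positivity)
    have step2 := iterScale D f (r₁:ℝ) hr₁0 hsub₁ m S hS
    calc f (S * (r₁:ℝ) ^ m * (r₂:ℝ) ^ n) ≤ ((r₂:ℝ) ^ n) ^ D * f (S * (r₁:ℝ) ^ m) := step1
      _ ≤ ((r₂:ℝ) ^ n) ^ D * (((r₁:ℝ) ^ m) ^ D * f S) :=
          mul_le_mul_of_nonneg_left step2 (by positivity)
      _ = R ^ D * f S := by rw [hR]; ring
  have hfT : f T ≤ R ^ D * f S := by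
    refine le_trans (hf_mono T _ hT0 hTle) ?_
    have : S * (r₁:ℝ) ^ m * (r₂:ℝ) ^ n = S * ((r₁:ℝ) ^ m * (r₂:ℝ) ^ n) := by ring
    rw [this, ← hR] at hiter ⊢
    rwa [show S * R = S * R from rfl] at hiter
  -- conclude G T < θ + ε
  have hexpδ : (Real.exp δ) ^ D = ρ := by
    rw [← Real.exp_nat_mul, hδ']
    have hD0 : (D:ℝ) ≠ 0 := by positivity
    rw [mul_div_cancel₀ _ hD0, Real.exp_log (by positivity)]
  have hGS0 : 0 ≤ G S := hGnonneg S hS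
  have hGT : G T ≤ ρ * G S := by
    have hkey : R ^ D * f S ≤ ρ * G S * T ^ D := by
      have hRS : R * S ≤ T * Real.exp δ := by
        have := mul_le_mul_of_nonneg_right hRTS hS.le
        calc R * S ≤ (T / S) * Real.exp δ * S := this
        _ = T * Real.exp δ := by field_simp
      have hRSpow : (R * S) ^ D ≤ (T * Real.exp δ) ^ D :=
        pow_le_pow_left₀ (by positivity) hRS D
      have hfS : f S = G S * S ^ D := by
        rw [hG]; field_simp
      rw [hfS]
      calc R ^ D * (G S * S ^ D) = (R * S) ^ D * G S := by rw [mul_pow]; ring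
        _ ≤ (T * Real.exp δ) ^ D * G S := mul_le_mul_of_nonneg_right hRSpow hGS0
        _ = ρ * G S * T ^ D := by rw [mul_pow, hexpδ]; ring
    rw [hG]
    rw [div_le_iff₀ (by positivity : (0:ℝ) < T ^ D)]
    calc f T ≤ R ^ D * f S := hfT
      _ ≤ ρ * G S * T ^ D := hkey
  have hup : G T < θ + ε := by
    have : ρ * G S < ρ * (θ + ε/2) := by
      apply mul_lt_mul_of_pos_left hy (by linarith)
    have hρeq : ρ * (θ + ε/2) = θ + ε := by
      rw [hρ]; field_simp
    linarith [hGT]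
  have hlo := hlow T hT0
  rw [Real.dist_eq, abs_lt]
  constructor <;> [linarith; linarith]
end

section
/- For every H ∈ (0,1) and every t ≥ 0, (2H+2) · e^{−(1+H)t} · ∫₀^1 ∫₀^{e^t} (u^{2H} + v^{2H} − |u−v|^{2H})/2 dv du = B_H(t), where B_H(t) = [2(1+H)(e^{Ht} + e^{−Ht}) − (e^{(1+H)t} + e^{−(1+H)t}) + (e^{t/2} − e^{−t/2})^{2H+2}]/(2+4H). -/
/-!
For `0 ≤ a ≤ b` the double integral of the fractional Brownian kernel is elementary: splitting
at `v = u` gives `∫₀^b |u - v|^r dv = (u^(r+1) + (b - u)^(r+1))/(r+1)`, and one more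
integration in `u` yields a closed form in powers of `a`, `b` and `b - a`. At `a = 1`, `b = e^t`
the factor `e^{-(1+H)t}` turns each power of `e^t` into an exponential of `t`, and
`(e^t - 1)^(2H+2)` into `(e^{t/2} - e^{-t/2})^(2H+2)`.
-/

/-- The correlation function `B_H` (formula (18)) of the stationary process dual to the
integrated fractional Brownian motion of Hurst index `H`. -/
noncomputable def BH (H t : ℝ) : ℝ :=
  (2*(1+H)*(Real.exp (H*t) + Real.exp (-H*t))
    - (Real.exp ((1+H)*t) + Real.exp (-(1+H)*t))
    + (Real.exp (t/2) - Real.exp (-t/2)) ^ (2*H+2)) / (2+4*H)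

open Real intervalIntegral

theorem integral_abs_rpow {r c : ℝ} (hr : -1 < r) (hc : 0 ≤ c) :
    ∫ w in (0:ℝ)..c, |w| ^ r = c ^ (r + 1) / (r + 1) := by
  rw [integral_congr (g := fun w : ℝ => w ^ r) fun w hw => by
      rw [Set.uIcc_of_le hc] at hw; simp only [abs_of_nonneg hw.1],
    integral_rpow (Or.inl hr), zero_rpow (by linarith), sub_zero]

theorem integral_abs_sub_rpow {r u b : ℝ} (hr : 0 ≤ r) (hu : 0 ≤ u) (hub : u ≤ b) :
    ∫ v in (0:ℝ)..b, |u - v| ^ r = (u ^ (r + 1) + (b - u) ^ (r + 1)) / (r + 1) := by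
  have hcont : Continuous fun w : ℝ => |w| ^ r := by fun_prop (disch := linarith)
  have hshift : ∫ v in (0:ℝ)..b, |u - v| ^ r = ∫ w in (-u)..(b - u), |w| ^ r := by
    simp only [abs_sub_comm u]
    rw [integral_comp_sub_right (fun w => |w| ^ r), zero_sub]
  have hneg : ∫ w in (-u)..0, |w| ^ r = u ^ (r + 1) / (r + 1) := by
    rw [← neg_zero, ← integral_comp_neg]
    simpa only [abs_neg] using integral_abs_rpow (by linarith) hu
  rw [hshift, ← integral_add_adjacent_intervals (b := 0) (hcont.intervalIntegrable _ _)
    (hcont.intervalIntegrable _ _), hneg, integral_abs_rpow (by linarith) (sub_nonneg.2 hub),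
    add_div]

theorem integral_fbm_kernel {r u b : ℝ} (hr : 0 ≤ r) (hu : 0 ≤ u) (hub : u ≤ b) :
    ∫ v in (0:ℝ)..b, (u ^ r + v ^ r - |u - v| ^ r) / 2
      = (b * u ^ r + (b ^ (r + 1) - u ^ (r + 1) - (b - u) ^ (r + 1)) / (r + 1)) / 2 := by
  have hsum : Continuous fun v : ℝ => u ^ r + v ^ r := by fun_prop (disch := linarith)
  have habs : Continuous fun v : ℝ => |u - v| ^ r := by fun_prop (disch := linarith)
  rw [integral_div, integral_sub (hsum.intervalIntegrable _ _) (habs.intervalIntegrable _ _),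
    integral_add intervalIntegrable_const (intervalIntegrable_rpow' (by linarith)),
    integral_const, integral_rpow (Or.inl (by linarith)), integral_abs_sub_rpow hr hu hub,
    zero_rpow (by linarith), smul_eq_mul]
  have : r + 1 ≠ 0 := by linarith
  field_simp
  ring

theorem integral_integral_fbm_kernel {r a b : ℝ} (hr : 0 ≤ r) (ha : 0 ≤ a) (hab : a ≤ b) :
    ∫ u in (0:ℝ)..a, ∫ v in (0:ℝ)..b, (u ^ r + v ^ r - |u - v| ^ r) / 2
      = ((r + 2) * (a * b ^ (r + 1) + b * a ^ (r + 1)) - a ^ (r + 2) - b ^ (r + 2)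
          + (b - a) ^ (r + 2)) / (2 * (r + 1) * (r + 2)) := by
  have h1 : r + 1 ≠ 0 := by linarith
  have h2 : r + 2 ≠ 0 := by linarith
  let F : ℝ → ℝ := fun u => ((r + 2) * (b * u ^ (r + 1) + b ^ (r + 1) * u) - u ^ (r + 2)
    + (b - u) ^ (r + 2)) / (2 * (r + 1) * (r + 2))
  let f : ℝ → ℝ := fun u =>
    (b * u ^ r + (b ^ (r + 1) - u ^ (r + 1) - (b - u) ^ (r + 1)) / (r + 1)) / 2
  have hF : ∀ u, HasDerivAt F (f u) u := by
    intro u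
    have e1 := hasDerivAt_rpow_const (x := u) (p := r + 1) (Or.inr (by linarith))
    have e2 := hasDerivAt_rpow_const (x := u) (p := r + 2) (Or.inr (by linarith))
    have e3 := ((hasDerivAt_id u).const_sub b).rpow_const (p := r + 2) (Or.inr (by linarith))
    refine (((((e1.const_mul b).add ((hasDerivAt_id u).const_mul (b ^ (r + 1)))).const_mul
      (r + 2)).sub e2).add e3).div_const (2 * (r + 1) * (r + 2)) |>.congr_deriv ?_
    simp only [f, id, add_sub_cancel_right, show r + 2 - 1 = r + 1 by ring]
    field_simp
    ring
  have hf : Continuous f := by fun_prop (disch := linarith)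
  refine (integral_congr fun u hu => ?_).trans
    ((integral_eq_sub_of_hasDerivAt (fun u _ => hF u) (hf.intervalIntegrable _ _)).trans ?_)
  · rw [Set.uIcc_of_le ha] at hu
    exact integral_fbm_kernel hr hu.1 (hu.2.trans hab)
  · simp only [F, zero_rpow h1, zero_rpow h2, sub_zero]
    ring

theorem exp_mul_exp_rpow {c s d : ℝ} (t : ℝ) (h : c + s = d) :
    exp (c * t) * exp t ^ s = exp (d * t) := by
  rw [← exp_mul, ← exp_add, ← h]
  ring_nf

theorem exp_mul_rpow_exp_sub_one {p t : ℝ} (ht : 0 ≤ t) :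
    exp (-(p / 2) * t) * (exp t - 1) ^ p = (exp (t / 2) - exp (-t / 2)) ^ p := by
  have hsinh : exp (-t / 2) * (exp t - 1) = exp (t / 2) - exp (-t / 2) := by
    rw [mul_sub, ← exp_add, mul_one]
    ring_nf
  rw [← hsinh, mul_rpow (exp_pos _).le (sub_nonneg.2 (one_le_exp ht)), ← exp_mul]
  ring_nf

/-- the normalized correlation of the dual stationary process equals `B_H`:
`(2H+2) e^{−(1+H)t} ∫₀^1 ∫₀^{e^t} (u^{2H}+v^{2H}−|u−v|^{2H})/2 dv du = B_H(t)`. -/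
theorem statement2 (H t : ℝ) (hH : H ∈ Set.Ioo (0:ℝ) 1) (ht : 0 ≤ t) :
    (2*H+2) * Real.exp (-(1+H)*t) *
      (∫ u in (0:ℝ)..1, ∫ v in (0:ℝ)..(Real.exp t),
        (u ^ (2*H) + v ^ (2*H) - |u - v| ^ (2*H)) / 2)
      = BH H t := by
  have hH0 := hH.1
  rw [integral_integral_fbm_kernel (by positivity) zero_le_one (one_le_exp ht), BH,
    ← exp_mul_rpow_exp_sub_one ht, show -((2*H+2)/2) = -(1+H) by ring,
    ← exp_mul_exp_rpow t (show -(1+H) + (2*H+1) = H by ring),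
    ← exp_mul_exp_rpow t (show -(1+H) + 1 = -H by ring),
    ← exp_mul_exp_rpow t (show -(1+H) + (2*H+2) = 1+H by ring),
    rpow_one, one_rpow, one_rpow, one_mul, mul_one]
  field_simp
  ring
end

section
/- For every H ∈ (0,1), the function B_H(t) = [2(1+H)(e^{Ht} + e^{−Ht}) − (e^{(1+H)t} + e^{−(1+H)t}) + (e^{t/2} − e^{−t/2})^{2H+2}]/(2+4H) is nonincreasing on [0,∞). -/
open Real

theorem Real.one_sub_rpow_le_one_sub_mul {q s : ℝ} (hq : q ≤ 1) (hs0 : 0 ≤ s) (hs1 : s ≤ 1) :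
    (1 - q) ^ s ≤ 1 - s * q := by
  simpa [sub_eq_add_neg] using rpow_one_add_le_one_add_mul_self (s := -q) (by linarith) hs0 hs1

theorem one_add_mul_one_sub_rpow_le {q s : ℝ} (hq0 : 0 ≤ q) (hq1 : q ≤ 1) (hs0 : 0 ≤ s)
    (hs2 : s ≤ 2) :
    (1 + q) * (1 - q) ^ (1 + s) ≤ 1 - s * q + s * q ^ (1 + s) - q ^ (2 + s) := by
  have h1q : 0 ≤ 1 - q := by linarith
  have hs : 1 + s ≠ 0 := by positivity
  rw [rpow_add' h1q hs, rpow_add' hq0 hs, rpow_add' hq0 (by positivity), rpow_one, rpow_one,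
    rpow_two]
  have hqs1 : q ^ s ≤ 1 := rpow_le_one hq0 hq1 hs0
  rcases le_total s 1 with hs1 | hs1
  · have hb := one_sub_rpow_le_one_sub_mul hq1 hs0 hs1
    have hq2s : q ^ 2 ≤ q ^ s := by
      simpa [rpow_two] using rpow_le_rpow_of_exponent_ge' hq0 hq1 hs0 hs2
    nlinarith [mul_le_mul_of_nonneg_left hb (by positivity : 0 ≤ (1 + q) * (1 - q)),
      mul_nonneg (mul_nonneg hs0 hq0) (sub_nonneg.2 hq2s),
      mul_nonneg (sq_nonneg q) (sub_nonneg.2 hqs1)]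
  · obtain ⟨r, rfl⟩ : ∃ r, s = 1 + r := ⟨s - 1, by ring⟩
    have hr : 1 + r ≠ 0 := by linarith
    rw [rpow_add' h1q hr, rpow_add' hq0 hr, rpow_one, rpow_one]
    have hb := one_sub_rpow_le_one_sub_mul hq1 (by linarith) (by linarith : r ≤ 1)
    have hqr : q ≤ q ^ r := by
      simpa using rpow_le_rpow_of_exponent_ge' hq0 hq1 (by linarith) (by linarith : r ≤ 1)
    nlinarith [mul_le_mul_of_nonneg_left hb (by positivity : 0 ≤ (1 + q) * (1 - q) * (1 - q)),
      mul_nonneg (sq_nonneg q) (mul_nonneg (sub_nonneg.2 hqr) (by linarith : 0 ≤ 1 + r - q)),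
      mul_nonneg (sq_nonneg q) (mul_nonneg (by linarith : 0 ≤ 1 - r) (by nlinarith : 0 ≤ 1 - q ^ 2))]

theorem hasDerivAt_exp_const_mul (c t : ℝ) :
    HasDerivAt (fun x ↦ exp (c * x)) (exp (c * t) * c) t := by
  simpa using ((hasDerivAt_id t).const_mul c).exp

theorem hasDerivAt_BH {H t : ℝ} (hH : -1 / 2 ≤ H) (ht : 0 ≤ t) :
    HasDerivAt (BH H) ((1 + H) / (2 + 4 * H) * exp ((1 + H) * t) *
      ((1 + exp (-t)) * (1 - exp (-t)) ^ (1 + 2 * H) - 1 + 2 * H * exp (-t)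
        - 2 * H * exp (-t) ^ (1 + 2 * H) + exp (-t) ^ (2 + 2 * H))) t := by
  have hsinh := ((hasDerivAt_id' t).div_const 2).exp.sub ((hasDerivAt_id' t).neg.div_const 2).exp
  have h := (((((hasDerivAt_exp_const_mul H t).add (hasDerivAt_exp_const_mul (-H) t)).const_mul
    (2 * (1 + H))).sub ((hasDerivAt_exp_const_mul (1 + H) t).add
    (hasDerivAt_exp_const_mul (-(1 + H)) t))).add
    (hsinh.rpow_const (p := 2 * H + 2) (Or.inr (by linarith)))).div_const (2 + 4 * H)
  replace h : HasDerivAt (BH H) _ t := h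
  convert h using 1
  set q := exp (-t)
  have hq : q ≤ 1 := exp_le_one_iff.2 (by linarith)
  have hsub : exp (t / 2) - exp (-t / 2) = exp (t / 2) * (1 - q) := by
    rw [mul_sub, ← exp_add]; ring_nf
  have hadd : exp (t / 2) + exp (-t / 2) = exp (t / 2) * (1 + q) := by
    rw [mul_add, ← exp_add]; ring_nf
  have hsinh_rpow : (exp (t / 2) + exp (-t / 2)) * (exp (t / 2) - exp (-t / 2)) ^ (2 * H + 2 - 1)
      = exp ((1 + H) * t) * (1 + q) * (1 - q) ^ (1 + 2 * H) := by
    rw [hsub, hadd, mul_rpow (exp_pos _).le (by linarith), ← exp_mul,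
      show 2 * H + 2 - 1 = 1 + 2 * H by ring,
      show (1 + H) * t = t / 2 + t / 2 * (1 + 2 * H) by ring, exp_add]
    ring
  have hq_one : exp ((1 + H) * t) * q = exp (H * t) := by rw [← exp_add]; ring_nf
  have hq_one_add : exp ((1 + H) * t) * q ^ (1 + 2 * H) = exp (-H * t) := by
    rw [← exp_mul, ← exp_add]; ring_nf
  have hq_two_add : exp ((1 + H) * t) * q ^ (2 + 2 * H) = exp (-(1 + H) * t) := by
    rw [← exp_mul, ← exp_add]; ring_nf
  linear_combination (1 + H) / (2 + 4 * H) *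
    (2 * H * hq_one - 2 * H * hq_one_add + hq_two_add - hsinh_rpow)

/-- monotonicity assertion of Lemma 2: for every `H ∈ (0,1)`,
the function `B_H` is nonincreasing on `[0, ∞)`. -/
theorem statement3 (H : ℝ) (hH : H ∈ Set.Ioo (0:ℝ) 1) :
    AntitoneOn (BH H) (Set.Ici (0:ℝ)) := by
  obtain ⟨hH0, hH1⟩ := hH
  have hderiv : ∀ t ∈ Set.Ici (0:ℝ), HasDerivAt (BH H) _ t :=
    fun t ht ↦ hasDerivAt_BH (by linarith) ht
  refine antitoneOn_of_hasDerivWithinAt_nonpos (convex_Ici 0)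
    (fun t ht ↦ (hderiv t ht).continuousAt.continuousWithinAt)
    (fun t ht ↦ (hderiv t (interior_subset ht)).hasDerivWithinAt) fun t ht ↦ ?_
  have hq0 : 0 ≤ exp (-t) := (exp_pos _).le
  have hq1 : exp (-t) ≤ 1 := exp_le_one_iff.2 (by simpa using interior_subset ht)
  have hcore := one_add_mul_one_sub_rpow_le hq0 hq1 (by linarith : 0 ≤ 2 * H) (by linarith)
  refine mul_nonpos_of_nonneg_of_nonpos (by positivity) ?_
  linarith
end

section
/- There exists ρ ∈ (0,1) such that for every H ∈ (0,1) and every t ≥ 0, B_H(t) ≤ 1/cosh(ρ·H·(1−H)·t), where B_H(t) = [2(1+H)(e^{Ht} + e^{−Ht}) − (e^{(1+H)t} + e^{−(1+H)t}) + (e^{t/2} − e^{−t/2})^{2H+2}]/(2+4H). -/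
open Real Set

lemma one_add_mul_sub_one_le_rpow {u q : ℝ} (hu : 0 < u) (hq : q ≤ 0 ∨ 1 ≤ q) :
    1 + q * (u - 1) ≤ u ^ q := by
  rcases hq with hq | hq
  · calc 1 + q * (u - 1) ≤ 1 + q * log u := by
          linarith [mul_le_mul_of_nonpos_left (log_le_sub_one_of_pos hu) hq]
      _ ≤ exp (log u * q) := by linarith [add_one_le_exp (log u * q)]
      _ = u ^ q := by rw [rpow_def_of_pos hu]
  · simpa using one_add_mul_self_le_rpow_one_add (s := u - 1) (by linarith) hq

noncomputable def rpowTaylor (p u : ℝ) : ℝ := 1 + p * (u - 1) + p * (p - 1) / 2 * (u - 1) ^ 2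

lemma hasDerivAt_rpow_sub_rpowTaylor (p : ℝ) {u : ℝ} (hu : 0 < u) :
    HasDerivAt (fun u ↦ u ^ p - rpowTaylor p u)
      (p * (u ^ (p - 1) - (1 + (p - 1) * (u - 1)))) u := by
  have hpoly : HasDerivAt (fun u ↦ 1 + p * (u - 1) + p * (p - 1) / 2 * (u - 1) ^ 2)
      (p + p * (p - 1) / 2 * (2 * (u - 1))) u := by
    have hlin := (hasDerivAt_id' u).sub_const 1
    exact ((hlin.const_mul p).const_add 1).add ((hlin.pow 2).const_mul _) |>.congr_deriv
      (by simp)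
  unfold rpowTaylor
  exact ((hasDerivAt_rpow_const (Or.inl hu.ne')).sub hpoly).congr_deriv (by ring)

lemma rpow_le_rpowTaylor {p u : ℝ} (hp : p ∈ Icc 0 1 ∨ 2 ≤ p) (hu0 : 0 < u) (hu1 : u ≤ 1) :
    u ^ p ≤ rpowTaylor p u := by
  have hp0 : 0 ≤ p := hp.elim (·.1) fun h ↦ by linarith
  have hmono : MonotoneOn (fun u ↦ u ^ p - rpowTaylor p u) (Ioc 0 1) := by
    refine monotoneOn_of_hasDerivWithinAt_nonneg (convex_Ioc 0 1)
      (fun x hx ↦ (hasDerivAt_rpow_sub_rpowTaylor p hx.1).continuousAt.continuousWithinAt)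
      (f' := fun x ↦ p * (x ^ (p - 1) - (1 + (p - 1) * (x - 1))))
      (fun x hx ↦ ?_) (fun x hx ↦ ?_) <;> rw [interior_Ioc] at hx
    · exact (hasDerivAt_rpow_sub_rpowTaylor p hx.1).hasDerivWithinAt
    · refine mul_nonneg hp0 (sub_nonneg.2 (one_add_mul_sub_one_le_rpow hx.1 ?_))
      rcases hp with hp | hp
      · exact Or.inl (by linarith [hp.2])
      · exact Or.inr (by linarith)
  have := hmono ⟨hu0, hu1⟩ ⟨one_pos, le_rfl⟩ hu1
  simpa [rpowTaylor] using this

lemma rpowTaylor_le_rpow {p u : ℝ} (hp1 : 1 ≤ p) (hp2 : p ≤ 2) (hu0 : 0 < u) (hu1 : u ≤ 1) :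
    rpowTaylor p u ≤ u ^ p := by
  have hanti : AntitoneOn (fun u ↦ u ^ p - rpowTaylor p u) (Ioc 0 1) := by
    refine antitoneOn_of_hasDerivWithinAt_nonpos (convex_Ioc 0 1)
      (fun x hx ↦ (hasDerivAt_rpow_sub_rpowTaylor p hx.1).continuousAt.continuousWithinAt)
      (f' := fun x ↦ p * (x ^ (p - 1) - (1 + (p - 1) * (x - 1))))
      (fun x hx ↦ ?_) (fun x hx ↦ ?_) <;> rw [interior_Ioc] at hx
    · exact (hasDerivAt_rpow_sub_rpowTaylor p hx.1).hasDerivWithinAt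
    · refine mul_nonpos_of_nonneg_of_nonpos (by linarith) (sub_nonpos.2 ?_)
      simpa using rpow_one_add_le_one_add_mul_self (s := x - 1) (by linarith [hx.1])
        (p := p - 1) (by linarith) (by linarith)
  have := hanti ⟨hu0, hu1⟩ ⟨one_pos, le_rfl⟩ hu1
  simpa [rpowTaylor] using this

lemma one_sub_sq_div_two_le_inv_cosh (x : ℝ) : 1 - x ^ 2 / 2 ≤ (cosh x)⁻¹ :=
  calc 1 - x ^ 2 / 2 ≤ exp (-(x ^ 2 / 2)) := by linarith [add_one_le_exp (-(x ^ 2 / 2))]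
    _ = (exp (x ^ 2 / 2))⁻¹ := exp_neg _
    _ ≤ (cosh x)⁻¹ := inv_anti₀ (cosh_pos x) (cosh_le_exp_half_sq x)

lemma exp_neg_le_inv_cosh {x : ℝ} (hx : 0 ≤ x) : exp (-x) ≤ (cosh x)⁻¹ := by
  rw [exp_neg]
  refine inv_anti₀ (cosh_pos x) ?_
  rw [cosh_eq]
  linarith [exp_le_exp.2 (by linarith : -x ≤ x)]

lemma two_add_four_mul_le_exp {t : ℝ} (ht : 10 ≤ t) : 2 + 4 * t ≤ exp (11 / 24 * t) := by
  have he : (2.7 : ℝ) ^ 4 ≤ exp 1 ^ 4 := by gcongr; linarith [exp_one_gt_d9]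
  have hsplit : exp (11 / 24 * t) = exp 1 ^ 4 * exp (11 / 24 * t - 4) := by
    rw [← exp_nat_mul, ← exp_add]; ring_nf
  have hlin := add_one_le_exp (11 / 24 * t - 4)
  rw [hsplit]
  nlinarith [mul_le_mul he hlin (by linarith) (by positivity)]

lemma div_one_add_le_one_sub_exp_neg {t : ℝ} (ht : -1 < t) : t / (1 + t) ≤ 1 - exp (-t) := by
  have h1t : 0 < 1 + t := by linarith
  calc t / (1 + t) = 1 - (1 + t)⁻¹ := by field_simp; ring
    _ ≤ 1 - (exp t)⁻¹ := by gcongr; linarith [add_one_le_exp t]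
    _ = 1 - exp (-t) := by rw [exp_neg]

lemma mul_exp_neg_mul_le {a t c d : ℝ} (h : a ≤ exp (t * (d - c))) :
    a * exp (-t * d) ≤ exp (-t * c) :=
  calc a * exp (-t * d) ≤ exp (t * (d - c)) * exp (-t * d) :=
        mul_le_mul_of_nonneg_right h (exp_pos _).le
    _ = exp (-t * c) := by rw [← exp_add]; ring_nf

lemma one_sub_mul_mul_exp_le {t a b d : ℝ} (h : a + b = d) :
    (1 - t * b) * exp (-t * a) ≤ exp (-t * d) := by
  rw [← h, show -t * (a + b) = -t * b + -t * a by ring, exp_add]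
  exact mul_le_mul_of_nonneg_right (by linarith [add_one_le_exp (-t * b)]) (exp_pos _).le

noncomputable def bhNumerator (H u : ℝ) : ℝ :=
  2 * (1 + H) * (u ^ H + u ^ (-H)) - (u ^ (1 + H) + u ^ (-(1 + H)))
    + u ^ (-(1 + H)) * (1 - u) ^ (2 * H + 2)

lemma BH_eq_bhNumerator {H t : ℝ} (ht : 0 ≤ t) :
    BH H t = bhNumerator H (exp (-t)) / (2 + 4 * H) := by
  have hsinh : exp (t / 2) - exp (-t / 2) = exp (t / 2) * (1 - exp (-t)) := by
    rw [mul_sub, ← exp_add]; ring_nf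
  have hu1 : 0 ≤ 1 - exp (-t) := by simp [ht]
  unfold BH bhNumerator
  rw [hsinh, mul_rpow (exp_pos _).le hu1]
  simp only [← exp_mul]
  ring_nf

-- Bernoulli's inequality for `(1 - u)^{2H}`, resp. `(1 - u)^{2H-1}`, inside `bhNumerator`.
noncomputable def bhMajorantLow (H u : ℝ) : ℝ :=
  2 * (1 + H) * u ^ H - u ^ (1 + H) + (1 + 4 * H) * u ^ (1 - H) - 2 * H * u ^ (2 - H)

noncomputable def bhMajorantHigh (H u : ℝ) : ℝ :=
  2 * (1 + H) * u ^ H - u ^ (1 + H) + 6 * H * u ^ (1 - H) - (6 * H - 2) * u ^ (2 - H)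
    + (2 * H - 1) * u ^ (3 - H)

lemma rpow_mul_pow_of_add_eq {u a b : ℝ} {n : ℕ} (hu : 0 < u) (h : a + n = b) :
    u ^ a * u ^ n = u ^ b := by
  rw [← h, rpow_add_natCast hu.ne']

lemma bhNumerator_le_bhMajorantLow {H u : ℝ} (hH0 : 0 ≤ H) (hH : H ≤ 1 / 2) (hu0 : 0 < u)
    (hu1 : u ≤ 1) : bhNumerator H u ≤ bhMajorantLow H u := by
  have hbern : (1 - u) ^ (2 * H) ≤ 1 - 2 * H * u := by
    simpa [sub_eq_add_neg] using
      rpow_one_add_le_one_add_mul_self (s := -u) (by linarith) (p := 2 * H) (by linarith)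
        (by linarith)
  have hsplit : (1 - u) ^ (2 * H + 2) = (1 - u) ^ (2 * H) * (1 - u) ^ 2 := by
    rw [show 2 * H + 2 = 2 * H + ((2 : ℕ) : ℝ) by norm_num,
      rpow_add_natCast' (by linarith) (by positivity)]
  have e1 : u ^ (-(1 + H)) * u ^ 1 = u ^ (-H) := rpow_mul_pow_of_add_eq hu0 (by push_cast; ring)
  have e2 : u ^ (-(1 + H)) * u ^ 2 = u ^ (1 - H) := rpow_mul_pow_of_add_eq hu0 (by push_cast; ring)
  have e3 : u ^ (-(1 + H)) * u ^ 3 = u ^ (2 - H) := rpow_mul_pow_of_add_eq hu0 (by push_cast; ring)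
  calc bhNumerator H u
      ≤ 2 * (1 + H) * (u ^ H + u ^ (-H)) - (u ^ (1 + H) + u ^ (-(1 + H)))
          + u ^ (-(1 + H)) * ((1 - 2 * H * u) * (1 - u) ^ 2) := by
        unfold bhNumerator; rw [hsplit]; gcongr
    _ = 2 * (1 + H) * (u ^ H + u ^ (-H)) - (u ^ (1 + H) + u ^ (-(1 + H)))
          + (u ^ (-(1 + H)) - (2 + 2 * H) * (u ^ (-(1 + H)) * u ^ 1)
            + (1 + 4 * H) * (u ^ (-(1 + H)) * u ^ 2) - 2 * H * (u ^ (-(1 + H)) * u ^ 3)) := by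
        ring
    _ = bhMajorantLow H u := by rw [e1, e2, e3, bhMajorantLow]; ring

lemma bhNumerator_le_bhMajorantHigh {H u : ℝ} (hH : 1 / 2 ≤ H) (hH1 : H ≤ 1) (hu0 : 0 < u)
    (hu1 : u ≤ 1) : bhNumerator H u ≤ bhMajorantHigh H u := by
  have hbern : (1 - u) ^ (2 * H - 1) ≤ 1 - (2 * H - 1) * u := by
    simpa [sub_eq_add_neg] using
      rpow_one_add_le_one_add_mul_self (s := -u) (by linarith) (p := 2 * H - 1) (by linarith)
        (by linarith)
  have hsplit : (1 - u) ^ (2 * H + 2) = (1 - u) ^ (2 * H - 1) * (1 - u) ^ 3 := by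
    rw [show 2 * H + 2 = 2 * H - 1 + ((3 : ℕ) : ℝ) by norm_num; ring,
      rpow_add_natCast' (by linarith) (by push_cast; linarith)]
  have e1 : u ^ (-(1 + H)) * u ^ 1 = u ^ (-H) := rpow_mul_pow_of_add_eq hu0 (by push_cast; ring)
  have e2 : u ^ (-(1 + H)) * u ^ 2 = u ^ (1 - H) := rpow_mul_pow_of_add_eq hu0 (by push_cast; ring)
  have e3 : u ^ (-(1 + H)) * u ^ 3 = u ^ (2 - H) := rpow_mul_pow_of_add_eq hu0 (by push_cast; ring)
  have e4 : u ^ (-(1 + H)) * u ^ 4 = u ^ (3 - H) := rpow_mul_pow_of_add_eq hu0 (by push_cast; ring)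
  calc bhNumerator H u
      ≤ 2 * (1 + H) * (u ^ H + u ^ (-H)) - (u ^ (1 + H) + u ^ (-(1 + H)))
          + u ^ (-(1 + H)) * ((1 - (2 * H - 1) * u) * (1 - u) ^ 3) := by
        unfold bhNumerator; rw [hsplit]; gcongr
    _ = 2 * (1 + H) * (u ^ H + u ^ (-H)) - (u ^ (1 + H) + u ^ (-(1 + H)))
          + (u ^ (-(1 + H)) - (2 + 2 * H) * (u ^ (-(1 + H)) * u ^ 1)
            + 6 * H * (u ^ (-(1 + H)) * u ^ 2) - (6 * H - 2) * (u ^ (-(1 + H)) * u ^ 3)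
            + (2 * H - 1) * (u ^ (-(1 + H)) * u ^ 4)) := by
        ring
    _ = bhMajorantHigh H u := by rw [e1, e2, e3, e4, bhMajorantHigh]; ring

lemma bhMajorantLow_le {H u : ℝ} (hH0 : 0 ≤ H) (hH1 : H ≤ 1) (hu0 : 0 < u) (hu1 : u ≤ 1) :
    bhMajorantLow H u ≤ 2 + 4 * H - (1 + 2 * H) * H * (1 - H) * (1 - u) ^ 2 := by
  have h1 := rpow_le_rpowTaylor (p := H) (Or.inl ⟨hH0, hH1⟩) hu0 hu1
  have h2 := rpowTaylor_le_rpow (p := 1 + H) (by linarith) (by linarith) hu0 hu1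
  have h3 := rpow_le_rpowTaylor (p := 1 - H) (Or.inl ⟨by linarith, by linarith⟩) hu0 hu1
  have h4 := rpowTaylor_le_rpow (p := 2 - H) (by linarith) (by linarith) hu0 hu1
  calc bhMajorantLow H u
      ≤ 2 * (1 + H) * rpowTaylor H u - rpowTaylor (1 + H) u
          + (1 + 4 * H) * rpowTaylor (1 - H) u - 2 * H * rpowTaylor (2 - H) u := by
        unfold bhMajorantLow; gcongr
    _ ≤ 2 + 4 * H - (1 + 2 * H) * H * (1 - H) * (1 - u) ^ 2 := by
        unfold rpowTaylor
        linarith [mul_nonneg (mul_nonneg hH0 (by linarith : 0 ≤ 3 - 2 * H)) (sq_nonneg (1 - u))]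

lemma bhMajorantHigh_le {H u : ℝ} (hH : 1 / 2 ≤ H) (hH1 : H ≤ 1) (hu0 : 0 < u) (hu1 : u ≤ 1) :
    bhMajorantHigh H u ≤ 2 + 4 * H - (1 + 2 * H) * H * (1 - H) * (1 - u) ^ 2 := by
  have h1 := rpow_le_rpowTaylor (p := H) (Or.inl ⟨by linarith, hH1⟩) hu0 hu1
  have h2 := rpowTaylor_le_rpow (p := 1 + H) (by linarith) (by linarith) hu0 hu1
  have h3 := rpow_le_rpowTaylor (p := 1 - H) (Or.inl ⟨by linarith, by linarith⟩) hu0 hu1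
  have h4 := rpowTaylor_le_rpow (p := 2 - H) (by linarith) (by linarith) hu0 hu1
  have h5 := rpow_le_rpowTaylor (p := 3 - H) (Or.inr (by linarith)) hu0 hu1
  calc bhMajorantHigh H u
      ≤ 2 * (1 + H) * rpowTaylor H u - rpowTaylor (1 + H) u + 6 * H * rpowTaylor (1 - H) u
          - (6 * H - 2) * rpowTaylor (2 - H) u + (2 * H - 1) * rpowTaylor (3 - H) u := by
        unfold bhMajorantHigh; gcongr <;> linarith
    _ ≤ 2 + 4 * H - (1 + 2 * H) * H * (1 - H) * (1 - u) ^ 2 := by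
        unfold rpowTaylor
        linarith [mul_nonneg (mul_nonneg (by linarith : 0 ≤ 1 - H) (by linarith : 0 ≤ 1 + 2 * H))
          (sq_nonneg (1 - u))]

lemma bhMajorantLow_exp_neg_le {H t : ℝ} (hH0 : 0 ≤ H) (hH : H ≤ 1 / 2) (ht : 10 ≤ t) :
    bhMajorantLow H (exp (-t)) ≤ (2 + 4 * H) * exp (-t * (H * (1 - H) / 6)) := by
  have hcross : (1 - t * (2 * H)) * exp (-t * (1 - H)) ≤ exp (-t * (1 + H)) :=
    one_sub_mul_mul_exp_le (by ring)
  have ht0 : 0 ≤ t := by linarith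
  have hslow : exp (-t * H) ≤ exp (-t * (H * (1 - H) / 6)) :=
    exp_le_exp.2 (by linarith [mul_nonneg (mul_nonneg ht0 hH0) (by linarith : 0 ≤ 5 + H)])
  have hfast : (2 + t) * exp (-t * (1 - H)) ≤ exp (-t * (H * (1 - H) / 6)) := by
    refine mul_exp_neg_mul_le ?_
    calc 2 + t ≤ 2 + 4 * t := by linarith
      _ ≤ exp (11 / 24 * t) := two_add_four_mul_le_exp ht
      _ ≤ exp (t * (1 - H - H * (1 - H) / 6)) := exp_le_exp.2 (by
          linarith [mul_nonneg ht0 (mul_nonneg (by linarith : 0 ≤ 1 / 2 - H)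
            (by linarith : 0 ≤ 13 / 12 - H / 6))])
  have hlast : 0 ≤ 2 * H * exp (-t * (2 - H)) := by positivity
  simp only [bhMajorantLow, ← exp_mul]
  linarith [mul_le_mul_of_nonneg_left hslow (by linarith : 0 ≤ 2 * (1 + H)),
    mul_le_mul_of_nonneg_left hfast (by linarith : 0 ≤ 2 * H)]

lemma bhMajorantHigh_exp_neg_le {H t : ℝ} (hH : 1 / 2 ≤ H) (hH1 : H ≤ 1) (ht : 10 ≤ t) :
    bhMajorantHigh H (exp (-t)) ≤ (2 + 4 * H) * exp (-t * (H * (1 - H) / 6)) := by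
  have ht0 : 0 ≤ t := by linarith
  have hdrop : (2 * H - 1) * exp (-t * (3 - H)) ≤ exp (-t * (1 + H)) :=
    (mul_le_of_le_one_left (exp_pos _).le (by linarith)).trans
      (exp_le_exp.2 (by linarith [mul_nonneg ht0 (by linarith : 0 ≤ 1 - H)]))
  have hcross : (1 - t * (2 * (1 - H))) * exp (-t * H) ≤ exp (-t * (2 - H)) :=
    one_sub_mul_mul_exp_le (by ring)
  have hslow : exp (-t * (1 - H)) ≤ exp (-t * (H * (1 - H) / 6)) :=
    exp_le_exp.2 (by linarith [mul_nonneg ht0 (mul_nonneg (by linarith : 0 ≤ 1 - H)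
      (by linarith : 0 ≤ 6 - H))])
  have hfast : (2 + 4 * t) * exp (-t * H) ≤ exp (-t * (H * (1 - H) / 6)) := by
    refine mul_exp_neg_mul_le ((two_add_four_mul_le_exp ht).trans (exp_le_exp.2 ?_))
    linarith [mul_nonneg ht0 (mul_nonneg (by linarith : 0 ≤ H - 1 / 2)
      (by linarith : 0 ≤ H / 6 + 11 / 12))]
  have hpos : 0 ≤ t * (1 - H) ^ 2 * exp (-t * H) := by positivity
  simp only [bhMajorantHigh, ← exp_mul]
  linarith [mul_le_mul_of_nonneg_left hcross (by linarith : 0 ≤ 6 * H - 2),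
    mul_le_mul_of_nonneg_left hfast (by linarith : 0 ≤ 2 * (1 - H)),
    mul_le_mul_of_nonneg_left hslow (by linarith : 0 ≤ 6 * H)]

lemma bhNumerator_le {H u : ℝ} (hH0 : 0 ≤ H) (hH1 : H ≤ 1) (hu0 : 0 < u) (hu1 : u ≤ 1) :
    bhNumerator H u ≤ 2 + 4 * H - (1 + 2 * H) * H * (1 - H) * (1 - u) ^ 2 := by
  rcases le_total H (1 / 2) with hH | hH
  · exact (bhNumerator_le_bhMajorantLow hH0 hH hu0 hu1).trans (bhMajorantLow_le hH0 hH1 hu0 hu1)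
  · exact (bhNumerator_le_bhMajorantHigh hH hH1 hu0 hu1).trans (bhMajorantHigh_le hH hH1 hu0 hu1)

lemma bhNumerator_exp_neg_le {H t : ℝ} (hH0 : 0 ≤ H) (hH1 : H ≤ 1) (ht : 10 ≤ t) :
    bhNumerator H (exp (-t)) ≤ (2 + 4 * H) * exp (-t * (H * (1 - H) / 6)) := by
  have hu1 : exp (-t) ≤ 1 := exp_le_one_iff.2 (by linarith)
  rcases le_total H (1 / 2) with hH | hH
  · exact (bhNumerator_le_bhMajorantLow hH0 hH (exp_pos _) hu1).trans
      (bhMajorantLow_exp_neg_le hH0 hH ht)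
  · exact (bhNumerator_le_bhMajorantHigh hH hH1 (exp_pos _) hu1).trans
      (bhMajorantHigh_exp_neg_le hH hH1 ht)

lemma BH_le_one_sub_sq {H t : ℝ} (hH0 : 0 ≤ H) (hH1 : H ≤ 1) (ht : 0 ≤ t) :
    BH H t ≤ 1 - H * (1 - H) / 2 * (1 - exp (-t)) ^ 2 := by
  rw [BH_eq_bhNumerator ht, div_le_iff₀ (by linarith)]
  linarith [bhNumerator_le hH0 hH1 (exp_pos (-t)) (exp_le_one_iff.2 (by linarith))]

lemma BH_le_exp_neg {H t : ℝ} (hH0 : 0 ≤ H) (hH1 : H ≤ 1) (ht : 10 ≤ t) :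
    BH H t ≤ exp (-t * (H * (1 - H) / 6)) := by
  rw [BH_eq_bhNumerator (by linarith), div_le_iff₀ (by linarith)]
  linarith [bhNumerator_exp_neg_le hH0 hH1 ht]

/-- estimate (19) of Lemma 2: there exists `ρ ∈ (0,1)` such that
`B_H(t) ≤ 1/cosh(ρ H (1−H) t)` for every `H ∈ (0,1)` and every `t ≥ 0`. -/
theorem statement4 :
    ∃ ρ : ℝ, ρ ∈ Set.Ioo (0:ℝ) 1 ∧
      ∀ H : ℝ, H ∈ Set.Ioo (0:ℝ) 1 → ∀ t : ℝ, 0 ≤ t →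
        BH H t ≤ 1 / Real.cosh (ρ * H * (1 - H) * t) := by
  refine ⟨1 / 6, ⟨by norm_num, by norm_num⟩, fun H ⟨hH0, hH1⟩ t ht ↦ ?_⟩
  have hH : 0 ≤ H * (1 - H) := mul_nonneg hH0.le (by linarith)
  rw [one_div]
  rcases le_total t 10 with hsmall | hlarge
  · have hv : t / 12 ≤ 1 - exp (-t) :=
      (div_le_div_of_nonneg_left ht (by linarith) (by linarith)).trans
        (div_one_add_le_one_sub_exp_neg (by linarith))
    have hv2 : (t / 12) ^ 2 ≤ (1 - exp (-t)) ^ 2 := pow_le_pow_left₀ (by positivity) hv 2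
    have hH4 : H * (1 - H) ≤ 1 / 4 := by nlinarith [sq_nonneg (H - 1 / 2)]
    calc BH H t ≤ 1 - H * (1 - H) / 2 * (1 - exp (-t)) ^ 2 := BH_le_one_sub_sq hH0.le hH1.le ht
      _ ≤ 1 - (1 / 6 * H * (1 - H) * t) ^ 2 / 2 := by
        linarith [mul_le_mul_of_nonneg_left hv2 hH,
          mul_nonneg hH (mul_nonneg (sub_nonneg.2 hH4) (sq_nonneg t))]
      _ ≤ (cosh (1 / 6 * H * (1 - H) * t))⁻¹ := one_sub_sq_div_two_le_inv_cosh _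
  · calc BH H t ≤ exp (-t * (H * (1 - H) / 6)) := BH_le_exp_neg hH0.le hH1.le hlarge
      _ = exp (-(1 / 6 * H * (1 - H) * t)) := by ring_nf
      _ ≤ (cosh (1 / 6 * H * (1 - H) * t))⁻¹ := exp_neg_le_inv_cosh (by positivity)
end

section
/- There exist t₀ > 0 and A > 0 such that for every H ∈ (0,1) and every t ∈ [0, t₀], one has 1 − B_H(t) ≥ 2A·H·(1−H)·(1 − e^{−t})², where B_H(t) = [2(1+H)(e^{Ht} + e^{−Ht}) − (e^{(1+H)t} + e^{−(1+H)t}) + (e^{t/2} − e^{−t/2})^{2H+2}]/(2+4H). -/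
open Real

set_option maxHeartbeats 1000000

/-! ### Auxiliary lemmas -/

lemma coshIdent (a b : ℝ) : cosh a - cosh b = 2 * sinh ((a+b)/2) * sinh ((a-b)/2) := by
  rw [Real.cosh_eq, Real.cosh_eq, Real.sinh_eq, Real.sinh_eq]
  have e1 : exp ((a+b)/2) * exp ((a-b)/2) = exp a := by rw [← Real.exp_add]; ring_nf
  have e2 : exp ((a+b)/2) * exp (-((a-b)/2)) = exp b := by rw [← Real.exp_add]; ring_nf
  have e3 : exp (-((a+b)/2)) * exp ((a-b)/2) = exp (-b) := by rw [← Real.exp_add]; ring_nf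
  have e4 : exp (-((a+b)/2)) * exp (-((a-b)/2)) = exp (-a) := by rw [← Real.exp_add]; ring_nf
  linear_combination (e2 + e3 - e1 - e4) / 2

lemma sinh_le_mul_exp {x : ℝ} (hx : 0 ≤ x) : sinh x ≤ x * exp x := by
  rw [Real.sinh_eq]
  have h1 : 1 - 2*x ≤ exp (-(2*x)) := by linarith [Real.add_one_le_exp (-(2*x))]
  have h2 : exp (-x) = exp x * exp (-(2*x)) := by rw [← Real.exp_add]; ring_nf
  nlinarith [Real.exp_pos x, Real.exp_pos (-(2*x))]

lemma le_sinh' {x : ℝ} (hx : 0 ≤ x) : x ≤ sinh x := Real.self_le_sinh_iff.2 hx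

lemma sinh_nn {x : ℝ} (hx : 0 ≤ x) : 0 ≤ sinh x := le_trans hx (le_sinh' hx)

lemma cosh_sub_cosh_ge {a b : ℝ} (hb : 0 ≤ b) (hab : b ≤ a) :
    (a^2 - b^2)/2 ≤ cosh a - cosh b := by
  rw [coshIdent a b]
  have h1 : (a+b)/2 ≤ sinh ((a+b)/2) := le_sinh' (by linarith)
  have h2 : (a-b)/2 ≤ sinh ((a-b)/2) := le_sinh' (by linarith)
  nlinarith [sinh_nn (show (0:ℝ) ≤ (a-b)/2 by linarith),
    sinh_nn (show (0:ℝ) ≤ (a+b)/2 by linarith)]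

lemma cosh_sub_cosh_le {a b : ℝ} (hb : 0 ≤ b) (hab : b ≤ a) :
    cosh a - cosh b ≤ (a^2 - b^2)/2 * exp a := by
  rw [coshIdent a b]
  have h1 : sinh ((a+b)/2) ≤ (a+b)/2 * exp ((a+b)/2) := sinh_le_mul_exp (by linarith)
  have h2 : sinh ((a-b)/2) ≤ (a-b)/2 * exp ((a-b)/2) := sinh_le_mul_exp (by linarith)
  have h3 : exp ((a+b)/2) * exp ((a-b)/2) = exp a := by rw [← Real.exp_add]; ring_nf
  have h4 : 0 ≤ sinh ((a-b)/2) := sinh_nn (by linarith)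
  have h5 : 0 ≤ sinh ((a+b)/2) := sinh_nn (by linarith)
  nlinarith [Real.exp_pos ((a+b)/2), Real.exp_pos ((a-b)/2),
    mul_nonneg (mul_nonneg (show (0:ℝ) ≤ (a+b)/2 by linarith)
      (le_of_lt (Real.exp_pos ((a+b)/2)))) h4]

lemma exp_neg_ten_le : exp (-10 : ℝ) ≤ 1/1000 := by
  have h2 : (2:ℝ) ≤ exp 1 := by linarith [Real.add_one_le_exp (1:ℝ)]
  have h10 : (1024:ℝ) ≤ exp 10 := by
    have he : exp (10:ℝ) = (exp 1)^(10:ℕ) := by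
      rw [← Real.exp_nat_mul]; norm_num
    rw [he]
    calc (1024:ℝ) = 2^(10:ℕ) := by norm_num
    _ ≤ (exp 1)^(10:ℕ) := pow_le_pow_left₀ (by norm_num) h2 10
  have h : exp (-10:ℝ) = (exp 10)⁻¹ := by rw [← Real.exp_neg]
  rw [h, inv_le_comm₀ (by positivity) (by norm_num)]
  linarith

lemma exp_le_one_add_two_mul {x : ℝ} (h0 : 0 ≤ x) (h1 : x ≤ 1/2) : exp x ≤ 1 + 2*x := by
  have h := Real.add_one_le_exp (-x)
  have hp := Real.exp_pos x
  have hx : exp (-x) = (exp x)⁻¹ := Real.exp_neg x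
  rw [hx] at h
  have hc : (exp x)⁻¹ * exp x = 1 := inv_mul_cancel₀ (ne_of_gt hp)
  nlinarith [mul_le_mul_of_nonneg_right h hp.le]

lemma exp_neg_le_one_sub {y : ℝ} (h0 : 0 ≤ y) (h1 : y ≤ 9/10) :
    exp (-(19*y)) ≤ 1 - y := by
  have h := Real.add_one_le_exp (19*y)
  have hp := Real.exp_pos (19*y)
  have hx : exp (-(19*y)) = (exp (19*y))⁻¹ := Real.exp_neg _
  rw [hx]
  have hinv : (exp (19*y))⁻¹ ≤ (1 + 19*y)⁻¹ := inv_anti₀ (by linarith) (by linarith)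
  have hc2 : (1 + 19*y)⁻¹ * (1 + 19*y) = 1 := inv_mul_cancel₀ (by positivity)
  have hip : (0:ℝ) < (1 + 19*y)⁻¹ := by positivity
  nlinarith

lemma exp_mul_one_sub_le (x : ℝ) : exp x * (1 - x) ≤ 1 := by
  have h := Real.add_one_le_exp (-x)
  have hp := Real.exp_pos x
  have hx : exp (-x) * exp x = 1 := by rw [← Real.exp_add]; simp
  nlinarith [mul_le_mul_of_nonneg_right h hp.le]

lemma aux_small {t : ℝ} (ht : 0 < t) (h : t ≤ 1/1000) : 4*t*(1+4*t) ≤ 1/100 := by nlinarith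

lemma sq_sinh_half (t : ℝ) : (2*sinh (t/2))^2 = 2*cosh t - 2 := by
  have h : cosh t = 2 * sinh (t/2)^2 + 1 := by
    rw [show t = 2*(t/2) by ring, Real.cosh_two_mul, Real.cosh_sq]; ring
  nlinarith [h]

/-! ### The estimate for `H ≤ 9/10` -/

lemma Sbound1 {H t : ℝ} (hH0 : 0 < H) (hH9 : H ≤ 9/10) (ht : 0 < t) (ht0 : t ≤ exp (-10)) :
    (2*sinh (t/2)) ^ (2*H+2) ≤ (1-H) * (2*sinh (t/2))^2 := by
  set u := 2*sinh (t/2) with hudef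
  have hsp : 0 < sinh (t/2) := Real.sinh_pos_iff.2 (by linarith)
  have hu : 0 < u := by positivity
  have hu2 : u ≤ t * exp (t/2) := by
    have := sinh_le_mul_exp (show (0:ℝ) ≤ t/2 by linarith)
    rw [hudef]; linarith
  have hsplit : u ^ (2*H+2) = u ^ (2*H) * u^2 := by
    rw [Real.rpow_add hu]
    congr 1
    rw [show ((2:ℝ)) = ((2:ℕ):ℝ) by norm_num, Real.rpow_natCast]
  rw [hsplit]
  have hmono : u ^ (2*H) ≤ (t * exp (t/2)) ^ (2*H) :=
    Real.rpow_le_rpow hu.le hu2 (by positivity)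
  have heq : (t * exp (t/2)) ^ (2*H) = exp ((log t + t/2) * (2*H)) := by
    rw [Real.rpow_def_of_pos (by positivity), Real.log_mul (ne_of_gt ht) (Real.exp_ne_zero _),
      Real.log_exp]
  have hlogt : log t ≤ -10 := by
    calc log t ≤ log (exp (-10)) := Real.log_le_log ht ht0
    _ = -10 := Real.log_exp _
  have htsmall : t ≤ 1/1000 := le_trans ht0 exp_neg_ten_le
  have hexple : (log t + t/2) * (2*H) ≤ -(19*H) := by nlinarith
  have hkey : u ^ (2*H) ≤ 1 - H := by
    calc u ^ (2*H) ≤ exp ((log t + t/2) * (2*H)) := heq ▸ hmono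
    _ ≤ exp (-(19*H)) := Real.exp_le_exp.2 hexple
    _ ≤ 1 - H := exp_neg_le_one_sub hH0.le hH9
  have hu2nn : (0:ℝ) ≤ u^2 := sq_nonneg u
  nlinarith [Real.rpow_pos_of_pos hu (2*H)]

lemma case1 {H t : ℝ} (hH0 : 0 < H) (hH9 : H ≤ 9/10) (ht : 0 < t) (ht0 : t ≤ exp (-10)) :
    H*(1-H)*t^2 ≤ (2+4*H) - (4*(1+H)*cosh (H*t) - 2*cosh ((1+H)*t) + (2*sinh (t/2))^(2*H+2)) := by
  have hS := Sbound1 hH0 hH9 ht ht0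
  rw [sq_sinh_half] at hS
  have htsmall : t ≤ 1/1000 := le_trans ht0 exp_neg_ten_le
  have B1 : (((1+H)*t)^2 - t^2)/2 ≤ cosh ((1+H)*t) - cosh t :=
    cosh_sub_cosh_ge ht.le (by nlinarith)
  have B2 : (t^2 - 0^2)/2 ≤ cosh t - cosh 0 := cosh_sub_cosh_ge le_rfl ht.le
  rw [Real.cosh_zero] at B2
  have B3 : cosh (H*t) - cosh 0 ≤ ((H*t)^2 - 0^2)/2 * exp (H*t) :=
    cosh_sub_cosh_le le_rfl (by positivity)
  rw [Real.cosh_zero] at B3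
  have hE : exp (H*t) ≤ 1 + 2*t := by
    calc exp (H*t) ≤ 1 + 2*(H*t) := exp_le_one_add_two_mul (by positivity) (by nlinarith)
    _ ≤ 1 + 2*t := by nlinarith
  have B3' : cosh (H*t) - 1 ≤ (H*t)^2/2 * (1 + 2*t) := by
    have hnn : (0:ℝ) ≤ (H*t)^2/2 := by positivity
    calc cosh (H*t) - 1 ≤ ((H*t)^2 - 0^2)/2 * exp (H*t) := B3
    _ ≤ (H*t)^2/2 * (1 + 2*t) := by
        nlinarith [mul_le_mul_of_nonneg_left hE hnn]
  have B2' : H * (t^2/2) ≤ H * (cosh t - 1) := by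
    apply mul_le_mul_of_nonneg_left _ hH0.le; linarith
  have B3'' : 4*(1+H) * (cosh (H*t) - 1) ≤ 4*(1+H) * ((H*t)^2/2 * (1 + 2*t)) := by
    apply mul_le_mul_of_nonneg_left B3' (by linarith)
  have hf2 : 0 ≤ 2 - 2*H^2 - 4*t*(1+H)*H := by nlinarith
  have hpoly : 0 ≤ H*t^2*(2 - 2*H^2 - 4*t*(1+H)*H) :=
    mul_nonneg (by positivity) hf2
  nlinarith [B1, B2', B3'', hpoly, hS]

/-! ### The estimate for `9/10 ≤ H < 1` -/

lemma Sbound2 {H t : ℝ} (hH9 : 9/10 ≤ H) (hH1 : H < 1) (ht : 0 < t) (ht0 : t ≤ exp (-10)) :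
    (2*sinh (t/2)) ^ (2*H+2) ≤ (2*sinh (t/2))^4 + (1-H)*t^2/100 := by
  set u := 2*sinh (t/2) with hudef
  have hsp : 0 < sinh (t/2) := Real.sinh_pos_iff.2 (by linarith)
  have hu : 0 < u := by positivity
  have htu : t ≤ u := by
    have := le_sinh' (show (0:ℝ) ≤ t/2 by linarith); rw [hudef]; linarith
  have hu2 : u ≤ t * exp (t/2) := by
    have := sinh_le_mul_exp (show (0:ℝ) ≤ t/2 by linarith); rw [hudef]; linarith
  have htsmall : t ≤ 1/1000 := le_trans ht0 exp_neg_ten_le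
  have ht1 : t ≤ 1 := by linarith
  have hsplit : u ^ (2*H+2) = u ^ (2*H-2) * u^4 := by
    rw [show 2*H+2 = (2*H-2)+(4:ℝ) by ring, Real.rpow_add hu]
    congr 1
    rw [show ((4:ℝ)) = ((4:ℕ):ℝ) by norm_num, Real.rpow_natCast]
  have hneg : u ^ (2*H-2) ≤ t ^ (2*H-2) := by
    rw [show 2*H-2 = -(2-2*H) by ring, Real.rpow_neg hu.le, Real.rpow_neg ht.le]
    exact inv_anti₀ (Real.rpow_pos_of_pos ht _) (Real.rpow_le_rpow ht.le htu (by linarith))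
  have hu4 : (0:ℝ) < u^4 := by positivity
  have step1 : u ^ (2*H+2) ≤ t ^ (2*H-2) * u^4 := by
    rw [hsplit]; exact mul_le_mul_of_nonneg_right hneg hu4.le
  set L : ℝ := -log t with hLdef
  have hlogt : log t ≤ -10 := by
    calc log t ≤ log (exp (-10)) := Real.log_le_log ht ht0
    _ = -10 := Real.log_exp _
  have hL10 : 10 ≤ L := by rw [hLdef]; linarith
  set x : ℝ := (2-2*H) * L with hxdef
  have hx0 : 0 ≤ x := by
    apply mul_nonneg (by linarith) (by linarith)
  have heq : t ^ (2*H-2) = exp x := by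
    rw [Real.rpow_def_of_pos ht]
    congr 1
    rw [hxdef, hLdef]; ring
  have hxe : exp x - 1 ≤ x * exp x := by nlinarith [exp_mul_one_sub_le x]
  have step2 : t ^ (2*H-2) * u^4 ≤ u^4 + x * (t ^ (2*H-2) * u^4) := by
    rw [heq]
    nlinarith [hxe, hu4]
  have hu4b : u^4 ≤ t^4 * exp (2*t) := by
    have h1 : u^4 ≤ (t * exp (t/2))^4 := pow_le_pow_left₀ hu.le hu2 4
    have h2 : (t * exp (t/2))^4 = t^4 * exp (2*t) := by
      rw [mul_pow]
      congr 1
      rw [← Real.exp_nat_mul]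
      congr 1
      push_cast; ring
    linarith [h2 ▸ h1]
  have hLb : L ≤ 2 * t ^ (-(1/2) : ℝ) := by
    have h1 : log (t ^ (-(1/2):ℝ)) = -(1/2) * log t := Real.log_rpow ht _
    have h2 : log (t ^ (-(1/2):ℝ)) ≤ t ^ (-(1/2):ℝ) := by
      have := Real.log_le_sub_one_of_pos (Real.rpow_pos_of_pos ht (-(1/2):ℝ))
      linarith
    rw [hLdef]; nlinarith [h1, h2]
  have hkey : t ^ (-(1/2):ℝ) * (t ^ (2*H-2) * t^4) ≤ t^3 := by
    have e1 : t ^ (-(1/2):ℝ) * (t ^ (2*H-2) * t^4) = t ^ (2*H + 3/2 : ℝ) := by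
      rw [show (t:ℝ)^4 = t ^ ((4:ℕ):ℝ) by rw [Real.rpow_natCast], ← Real.rpow_add ht,
        ← Real.rpow_add ht]
      congr 1; push_cast; ring
    have e2 : t ^ (2*H + 3/2 : ℝ) ≤ t ^ (3:ℝ) :=
      Real.rpow_le_rpow_of_exponent_ge ht ht1 (by linarith)
    have e3 : t ^ (3:ℝ) = t^3 := by
      rw [show ((3:ℝ)) = ((3:ℕ):ℝ) by norm_num, Real.rpow_natCast]
    rw [e1]; rw [e3] at e2; exact e2
  have hE2 : exp (2*t) ≤ 1 + 4*t := by
    have := exp_le_one_add_two_mul (show (0:ℝ) ≤ 2*t by linarith) (by linarith)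
    linarith
  have herr : x * (t ^ (2*H-2) * u^4) ≤ (1-H)*t^2/100 := by
    have ha : t ^ (2*H-2) * u^4 ≤ (t ^ (2*H-2) * t^4) * exp (2*t) := by
      have hrp : (0:ℝ) < t ^ (2*H-2) := Real.rpow_pos_of_pos ht _
      calc t ^ (2*H-2) * u^4 ≤ t ^ (2*H-2) * (t^4 * exp (2*t)) :=
        mul_le_mul_of_nonneg_left hu4b hrp.le
      _ = (t ^ (2*H-2) * t^4) * exp (2*t) := by ring
    have hb : x * (t ^ (2*H-2) * u^4) ≤ (2-2*H) * L * ((t ^ (2*H-2) * t^4) * exp (2*t)) := by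
      rw [hxdef]
      apply mul_le_mul_of_nonneg_left ha hx0
    have hc : L * (t ^ (2*H-2) * t^4) ≤ 2 * t^3 := by
      have hrnn : (0:ℝ) ≤ t ^ (2*H-2) * t^4 := by positivity
      calc L * (t ^ (2*H-2) * t^4) ≤ (2 * t ^ (-(1/2):ℝ)) * (t ^ (2*H-2) * t^4) :=
        mul_le_mul_of_nonneg_right hLb hrnn
      _ = 2 * (t ^ (-(1/2):ℝ) * (t ^ (2*H-2) * t^4)) := by ring
      _ ≤ 2 * t^3 := by linarith [hkey]
    have hd : (2-2*H) * L * ((t ^ (2*H-2) * t^4) * exp (2*t)) ≤ (2-2*H) * (2*t^3) * (1+4*t) := by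
      have hexp : (0:ℝ) < exp (2*t) := Real.exp_pos _
      have h1H : (0:ℝ) ≤ 2-2*H := by linarith
      calc (2-2*H) * L * ((t ^ (2*H-2) * t^4) * exp (2*t))
          = (2-2*H) * ((L * (t ^ (2*H-2) * t^4)) * exp (2*t)) := by ring
        _ ≤ (2-2*H) * ((2*t^3) * (1+4*t)) := by
            apply mul_le_mul_of_nonneg_left _ h1H
            apply mul_le_mul hc hE2 hexp.le (by positivity)
        _ = (2-2*H) * (2*t^3) * (1+4*t) := by ring
    have he : (2-2*H) * (2*t^3) * (1+4*t) ≤ (1-H)*t^2/100 := by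
      have h1 : 4*t*(1+4*t) ≤ 1/100 := aux_small ht htsmall
      have h2 : (0:ℝ) ≤ (1-H)*t^2 := by nlinarith [sq_nonneg t]
      calc (2-2*H) * (2*t^3) * (1+4*t) = ((1-H)*t^2) * (4*t*(1+4*t)) := by ring
      _ ≤ ((1-H)*t^2) * (1/100) := mul_le_mul_of_nonneg_left h1 h2
      _ = (1-H)*t^2/100 := by ring
    linarith
  calc u ^ (2*H+2) ≤ t ^ (2*H-2) * u^4 := step1
  _ ≤ u^4 + x * (t ^ (2*H-2) * u^4) := step2
  _ ≤ u^4 + (1-H)*t^2/100 := by linarith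

lemma case2 {H t : ℝ} (hH9 : 9/10 ≤ H) (hH1 : H < 1) (ht : 0 < t) (ht0 : t ≤ exp (-10)) :
    H*(1-H)*t^2 ≤ (2+4*H) - (4*(1+H)*cosh (H*t) - 2*cosh ((1+H)*t) + (2*sinh (t/2))^(2*H+2)) := by
  have hS := Sbound2 hH9 hH1 ht ht0
  have htsmall : t ≤ 1/1000 := le_trans ht0 exp_neg_ten_le
  have hu4 : (2*sinh (t/2))^4 = 2*cosh (2*t) - 8*cosh t + 6 := by
    have h2 : cosh (2*t) = cosh t^2 + sinh t^2 := Real.cosh_two_mul t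
    have h3 : sinh t^2 = cosh t^2 - 1 := Real.sinh_sq t
    calc (2*sinh (t/2))^4 = ((2*sinh (t/2))^2)^2 := by ring
    _ = (2*cosh t - 2)^2 := by rw [sq_sinh_half]
    _ = 2*cosh (2*t) - 8*cosh t + 6 := by rw [h2, h3]; ring
  rw [hu4] at hS
  have hE2 : exp (2*t) ≤ 1 + 4*t := by
    have := exp_le_one_add_two_mul (show (0:ℝ) ≤ 2*t by linarith) (by linarith)
    linarith
  have C1 : cosh (2*t) - cosh ((1+H)*t) ≤ (((2*t)^2 - ((1+H)*t)^2)/2) * exp (2*t) :=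
    cosh_sub_cosh_le (by positivity) (by nlinarith)
  have C2 : (t^2 - (H*t)^2)/2 ≤ cosh t - cosh (H*t) :=
    cosh_sub_cosh_ge (by positivity) (by nlinarith)
  have C3 : ((H*t)^2 - 0^2)/2 ≤ cosh (H*t) - cosh 0 :=
    cosh_sub_cosh_ge le_rfl (by positivity)
  rw [Real.cosh_zero] at C3
  have hAnn : (0:ℝ) ≤ ((2*t)^2 - ((1+H)*t)^2)/2 := by
    nlinarith [mul_nonneg (mul_nonneg (show (0:ℝ) ≤ 1-H by linarith)
      (show (0:ℝ) ≤ 3+H by linarith)) (sq_nonneg t)]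
  have c1m : (((2*t)^2 - ((1+H)*t)^2)/2) * exp (2*t) ≤ (((2*t)^2 - ((1+H)*t)^2)/2) * (1+4*t) :=
    mul_le_mul_of_nonneg_left hE2 hAnn
  have P1 : 2*(cosh ((1+H)*t) - cosh (2*t)) ≥ -((4-(1+H)^2)*t^2*(1+4*t)) := by
    nlinarith [C1, c1m]
  have P2 : 8*(cosh t - cosh (H*t)) ≥ 4*(1-H^2)*t^2 := by nlinarith [C2]
  have P3 : 4*(1-H)*(cosh (H*t) - 1) ≥ 2*(1-H)*H^2*t^2 := by
    have h1H : (0:ℝ) ≤ 4*(1-H) := by linarith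
    nlinarith [mul_le_mul_of_nonneg_left C3 h1H]
  have h2nn : (0:ℝ) ≤ (1-H)*t^2 := mul_nonneg (by linarith) (sq_nonneg t)
  have hb : (0:ℝ) ≤ 1+2*H+2*H^2 - 1/100 - 4*t*(3+H) := by nlinarith
  have hpoly : H*(1-H)*t^2 + (1-H)*t^2/100 ≤
      -((4-(1+H)^2)*t^2*(1+4*t)) + 4*(1-H^2)*t^2 + 2*(1-H)*H^2*t^2 := by
    nlinarith [mul_nonneg h2nn hb]
  nlinarith [P1, P2, P3, hpoly, hS]

/-! ### Combined core estimate -/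

lemma core {H t : ℝ} (hH0 : 0 < H) (hH1 : H < 1) (ht : 0 < t) (ht0 : t ≤ exp (-10)) :
    H*(1-H)*t^2 ≤ (2+4*H) - (4*(1+H)*cosh (H*t) - 2*cosh ((1+H)*t) + (2*sinh (t/2))^(2*H+2)) := by
  rcases le_or_gt H (9/10) with h | h
  · exact case1 hH0 h ht ht0
  · exact case2 h.le hH1 ht ht0

/-- Admission 2 of Lemma 2, small-`t` estimate: there exist `t₀ > 0` and
`A > 0` such that `1 − B_H(t) ≥ 2 A H (1−H) (1 − e^{−t})²` for every `H ∈ (0,1)` and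
every `t ∈ [0, t₀]`. -/
theorem statement11 :
    ∃ t₀ > (0:ℝ), ∃ A > (0:ℝ), ∀ H : ℝ, H ∈ Set.Ioo (0:ℝ) 1 →
      ∀ t : ℝ, t ∈ Set.Icc 0 t₀ →
        2*A*H*(1-H)*(1 - Real.exp (-t))^2 ≤ 1 - BH H t := by
  refine ⟨Real.exp (-10), Real.exp_pos _, 1/12, by norm_num, ?_⟩
  rintro H ⟨hH0, hH1⟩ t ⟨ht0, ht1⟩
  have hpos : (0:ℝ) < 2+4*H := by linarith
  rcases eq_or_lt_of_le ht0 with h0 | h0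
  · -- t = 0
    subst h0
    have hz : (0:ℝ)^(2*H+2) = 0 := Real.zero_rpow (by positivity)
    have hB : BH H 0 = 1 := by
      unfold BH
      norm_num
      rw [hz]
      field_simp
      ring
    rw [hB]
    norm_num
  · -- t > 0
    have key := core hH0 hH1 h0 ht1
    have a1 : 4*(1+H)*cosh (H*t) = 2*(1+H)*(exp (H*t) + exp (-H*t)) := by
      rw [Real.cosh_eq]; ring_nf
    have a2 : 2*cosh ((1+H)*t) = exp ((1+H)*t) + exp (-(1+H)*t) := by
      rw [Real.cosh_eq]; ring_nf
    have a3 : 2*sinh (t/2) = exp (t/2) - exp (-t/2) := by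
      rw [Real.sinh_eq]; ring_nf
    rw [a3, a1, a2] at key
    unfold BH
    have hdiv : 1 - (2*(1+H)*(exp (H*t) + exp (-H*t))
        - (exp ((1+H)*t) + exp (-(1+H)*t))
        + (exp (t/2) - exp (-t/2)) ^ (2*H+2)) / (2+4*H)
        = ((2+4*H) - (2*(1+H)*(exp (H*t) + exp (-H*t))
        - (exp ((1+H)*t) + exp (-(1+H)*t))
        + (exp (t/2) - exp (-t/2)) ^ (2*H+2))) / (2+4*H) := by
      field_simp
    rw [hdiv, le_div_iff₀ hpos]
    have hexp1 : exp (-t) ≤ 1 := by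
      rw [show (1:ℝ) = exp 0 from (Real.exp_zero).symm]
      exact Real.exp_le_exp.2 (by linarith)
    have hexp2 : 1 - t ≤ exp (-t) := by linarith [Real.add_one_le_exp (-t)]
    have he2 : (1 - exp (-t))^2 ≤ t^2 := by nlinarith
    have hm : (0:ℝ) ≤ H*(1-H) := mul_nonneg hH0.le (by linarith)
    have hme : H*(1-H)*(1 - exp (-t))^2 ≤ H*(1-H)*t^2 := by
      nlinarith [mul_le_mul_of_nonneg_left he2 hm]
    have hmenn : (0:ℝ) ≤ H*(1-H)*(1 - exp (-t))^2 :=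
      mul_nonneg hm (sq_nonneg _)
    nlinarith [key, hme, hmenn]
end

section
/- For every H ∈ (0,1) and every t ≥ 0, one has B_H(t) ≤ 2·e^{−min(H, 1−H)·t}, where B_H(t) = [2(1+H)(e^{Ht} + e^{−Ht}) − (e^{(1+H)t} + e^{−(1+H)t}) + (e^{t/2} − e^{−t/2})^{2H+2}]/(2+4H). -/
open Real

lemma one_sub_rpow_le_taylor {p x : ℝ} (hp : 2 ≤ p) (hx0 : 0 ≤ x) (hx1 : x ≤ 1) :
    (1 - x) ^ p ≤ 1 - p * x + p * (p - 1) / 2 * x ^ 2 := by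
  set g : ℝ → ℝ := fun y => 1 - p * y + p * (p - 1) / 2 * y ^ 2 - (1 - y) ^ p
  have hg : ∀ y, HasDerivAt g (-p + p * (p - 1) * y + p * (1 - y) ^ (p - 1)) y := by
    intro y
    have hpow := (hasDerivAt_rpow_const (x := 1 - y) (Or.inr (by linarith : 1 ≤ p))).comp y
      ((hasDerivAt_id y).const_sub 1)
    have hpoly := (((hasDerivAt_id y).const_mul p).const_sub 1).add
      ((hasDerivAt_pow 2 y).const_mul (p * (p - 1) / 2))
    exact (hpoly.sub hpow).congr_deriv (by push_cast; ring)
  have hmono : MonotoneOn g (Set.Icc 0 1) := by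
    refine monotoneOn_of_deriv_nonneg (convex_Icc 0 1)
      (fun y _ => (hg y).continuousAt.continuousWithinAt)
      (fun y _ => (hg y).differentiableAt.differentiableWithinAt) fun y hy => ?_
    rw [interior_Icc] at hy
    rw [(hg y).deriv]
    have hbern : 1 - (p - 1) * y ≤ (1 - y) ^ (p - 1) := by
      simpa [sub_eq_add_neg] using
        one_add_mul_self_le_rpow_one_add (s := -y) (by linarith [hy.2]) (by linarith : 1 ≤ p - 1)
    nlinarith [hy.1]
  have hgx : g 0 ≤ g x := hmono (Set.left_mem_Icc.mpr zero_le_one) ⟨hx0, hx1⟩ hx0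
  norm_num [g] at hgx
  linarith

noncomputable def reducedBH (p x : ℝ) : ℝ :=
  (1 - x) ^ p - 1 - x ^ p + p * (x + x ^ (p - 1))

lemma reducedBH_le {p x : ℝ} (hp : 2 ≤ p) (hx0 : 0 < x) (hx1 : x ≤ 1) :
    reducedBH p x ≤ p * (p + 1) / 2 * x ^ min (p - 1) 2 := by
  have htaylor := one_sub_rpow_le_taylor hp hx0.le hx1
  have hsq : x ^ 2 ≤ x ^ min (p - 1) 2 := by
    simpa using rpow_le_rpow_of_exponent_ge hx0 hx1 (min_le_right (p - 1) 2)
  have hpow : x ^ (p - 1) ≤ x ^ min (p - 1) 2 :=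
    rpow_le_rpow_of_exponent_ge hx0 hx1 (min_le_left _ _)
  have hxp : 0 ≤ x ^ p := rpow_nonneg hx0.le p
  unfold reducedBH
  nlinarith [mul_le_mul_of_nonneg_left hsq (by nlinarith : 0 ≤ p * (p - 1) / 2),
    mul_le_mul_of_nonneg_left hpow (by linarith : 0 ≤ p)]

lemma BH_eq_reducedBH (H : ℝ) {t : ℝ} (ht : 0 ≤ t) :
    BH H t = exp ((1 + H) * t) * reducedBH (2 * H + 2) (exp (-t)) / (2 + 4 * H) := by
  have hsinh : exp (t / 2) - exp (-t / 2) = exp (t / 2) * (1 - exp (-t)) := by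
    rw [mul_sub, mul_one, ← exp_add]
    ring_nf
  have hx1 : 0 ≤ 1 - exp (-t) := by simp [ht]
  have hsinh_pow : (exp (t / 2) - exp (-t / 2)) ^ (2 * H + 2)
      = exp ((1 + H) * t) * (1 - exp (-t)) ^ (2 * H + 2) := by
    rw [hsinh, mul_rpow (exp_pos _).le hx1, ← exp_mul]
    ring_nf
  have hx : exp ((1 + H) * t) * exp (-t) = exp (H * t) := by
    rw [← exp_add]; ring_nf
  have hx_pow_sub_one : exp ((1 + H) * t) * exp (-t) ^ (2 * H + 2 - 1) = exp (-H * t) := by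
    rw [← exp_mul, ← exp_add]; ring_nf
  have hx_pow : exp ((1 + H) * t) * exp (-t) ^ (2 * H + 2) = exp (-(1 + H) * t) := by
    rw [← exp_mul, ← exp_add]; ring_nf
  rw [BH, reducedBH, hsinh_pow]
  congr 1
  linear_combination -(2 * (1 + H)) * hx - (2 * (1 + H)) * hx_pow_sub_one + hx_pow

/-- large-`t` estimates (26)–(29), Admission 3 of Lemma 2, combined:
`B_H(t) ≤ 2 e^{−min(H, 1−H) t}` for every `H ∈ (0,1)` and every `t ≥ 0`. -/
theorem statement12 (H t : ℝ) (hH : H ∈ Set.Ioo (0:ℝ) 1) (ht : 0 ≤ t) :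
    BH H t ≤ 2 * Real.exp (-(min H (1 - H)) * t) := by
  obtain ⟨hH0, hH1⟩ := hH
  have hexp : exp ((1 + H) * t) * exp (-t) ^ min (2 * H + 2 - 1) 2
      = exp (-(min H (1 - H)) * t) := by
    rw [← exp_mul, ← exp_add]
    congr 1
    rcases le_total H (1 - H) with h | h
    · rw [min_eq_left h, min_eq_left (by linarith)]; ring
    · rw [min_eq_right h, min_eq_right (by linarith)]; ring
  have hpos : (0 : ℝ) < 2 + 4 * H := by linarith
  calc BH H t
      ≤ exp ((1 + H) * t) * ((2 * H + 2) * (2 * H + 2 + 1) / 2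
          * exp (-t) ^ min (2 * H + 2 - 1) 2) / (2 + 4 * H) := by
        rw [BH_eq_reducedBH H ht]
        gcongr
        exact reducedBH_le (by linarith) (exp_pos _) (by simp [ht])
    _ = (H + 1) * (2 * H + 3) / (2 + 4 * H) * exp (-(min H (1 - H)) * t) := by
        rw [← hexp]; ring
    _ ≤ 2 * exp (-(min H (1 - H)) * t) := by
        gcongr
        rw [div_le_iff₀ hpos]
        nlinarith
end

section
/- For every H ∈ (0,1) there exists c > 0 such that for all ε ∈ (0, 1/4]: ∫₀¹ (h/(h+ε))^{H} · (2h·√(log(1/h)))^{−1} dh ≤ c·√(log(1/ε)). -/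
/-!
Split the integral at `h = ε`. On `(0, ε]` we have `(h/(h+ε))^H ≤ (h/ε)^H` and, as
`ε ≤ 1/4 < e⁻¹`, `√(log (1/h)) ≥ 1`; so the integrand is at most `h^(H-1)/(2ε^H)`, whose
integral is `1/(2H)`. On `[ε, 1]` the first factor is at most `1`, and `(2h√(log (1/h)))⁻¹` is the
derivative of `-√(log (1/h))`, so this piece is at most `√(log (1/ε))`. Finally the constant
`1/(2H)` is absorbed using `√(log (1/ε)) ≥ 1`.
-/

open Real MeasureTheory intervalIntegral Set

lemma one_le_sqrt_log_one_div {x : ℝ} (hx : 0 < x) (hxe : x ≤ exp (-1)) : 1 ≤ √(log (1 / x)) := by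
  have := log_le_log hx hxe
  rw [log_exp] at this
  rw [Real.one_le_sqrt, one_div, log_inv]
  linarith

lemma hasDerivAt_neg_sqrt_log_one_div {x : ℝ} (hx0 : 0 < x) (hx1 : x < 1) :
    HasDerivAt (fun h => -√(log (1 / h))) (2 * x * √(log (1 / x)))⁻¹ x := by
  have hlog : 0 < log (1 / x) := log_pos (by rw [lt_div_iff₀ hx0]; linarith)
  have hinv : HasDerivAt (fun h : ℝ => 1 / h) (-(x ^ 2)⁻¹) x := by
    simpa using hasDerivAt_inv hx0.ne'
  refine (((hasDerivAt_log (by positivity)).comp x hinv).sqrt hlog.ne').neg.congr_deriv ?_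
  have := sqrt_pos.2 hlog
  simp only [Function.comp_apply]
  field_simp

lemma continuousOn_neg_sqrt_log_one_div : ContinuousOn (fun h : ℝ => -√(log (1 / h))) (Ioi 0) := by
  intro x (hx : 0 < x)
  fun_prop (disch := positivity)

lemma intervalIntegrable_inv_two_mul_sqrt_log_one_div {a b : ℝ} (ha : 0 < a) (hab : a ≤ b)
    (hb : b ≤ 1) :
    IntervalIntegrable (fun h => (2 * h * √(log (1 / h)))⁻¹) volume a b := by
  refine intervalIntegrable_deriv_of_nonneg
    (continuousOn_neg_sqrt_log_one_div.mono fun x hx => ?_) (fun x hx => ?_) (fun x hx => ?_)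
  · rw [uIcc_of_le hab] at hx
    exact ha.trans_le hx.1
  all_goals rw [min_eq_left hab, max_eq_right hab] at hx
  · exact hasDerivAt_neg_sqrt_log_one_div (ha.trans hx.1) (hx.2.trans_le hb)
  · have := ha.trans hx.1
    positivity

lemma integral_inv_two_mul_sqrt_log_one_div {a b : ℝ} (ha : 0 < a) (hab : a ≤ b) (hb : b ≤ 1) :
    ∫ h in a..b, (2 * h * √(log (1 / h)))⁻¹ = √(log (1 / a)) - √(log (1 / b)) := by
  rw [integral_eq_sub_of_hasDerivAt_of_le hab
    (continuousOn_neg_sqrt_log_one_div.mono fun x hx => ha.trans_le hx.1)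
    (fun x hx => hasDerivAt_neg_sqrt_log_one_div (ha.trans hx.1) (hx.2.trans_le hb))
    (intervalIntegrable_inv_two_mul_sqrt_log_one_div ha hab hb)]
  ring

lemma intervalIntegrable_of_nonneg_of_le {f g : ℝ → ℝ} {a b : ℝ} (hab : a ≤ b)
    (hg : IntervalIntegrable g volume a b) (hf : Measurable f)
    (hfg : ∀ x ∈ Ioc a b, 0 ≤ f x ∧ f x ≤ g x) : IntervalIntegrable f volume a b := by
  refine hg.mono_fun' hf.aestronglyMeasurable ?_
  rw [uIoc_of_le hab]
  refine (ae_restrict_iff' measurableSet_Ioc).2 (Filter.Eventually.of_forall fun x hx => ?_)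
  exact (Real.norm_of_nonneg (hfg x hx).1).trans_le (hfg x hx).2

lemma rpow_div_add_le_one {h ε H : ℝ} (hh : 0 ≤ h) (hε : 0 ≤ ε) (hH : 0 ≤ H) :
    (h / (h + ε)) ^ H ≤ 1 :=
  rpow_le_one (by positivity) (div_le_one_of_le₀ (by linarith) (by positivity)) hH

lemma integral_rpow_sub_one_div {ε H : ℝ} (hH : 0 < H) (hε : 0 < ε) :
    ∫ h in (0 : ℝ)..ε, h ^ (H - 1) / (2 * ε ^ H) = (2 * H)⁻¹ := by
  rw [intervalIntegral.integral_div, integral_rpow (Or.inl (by linarith)), sub_add_cancel,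
    zero_rpow hH.ne', sub_zero]
  have := rpow_pos_of_pos hε H
  field_simp

/-- The integrand `-δ_T(h) · d√(log (1/h))/dh` of the entropy integral, with `ε = 2 T⁻²`. -/
noncomputable def dudleyIntegrand (H ε h : ℝ) : ℝ := (h / (h + ε)) ^ H * (2 * h * √(log (1 / h)))⁻¹

section dudleyIntegrand

variable {H ε : ℝ}

@[fun_prop]
lemma measurable_dudleyIntegrand : Measurable (dudleyIntegrand H ε) := by
  unfold dudleyIntegrand
  fun_prop

lemma dudleyIntegrand_nonneg {h : ℝ} (hε : 0 ≤ ε) (hh : 0 < h) : 0 ≤ dudleyIntegrand H ε h := by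
  unfold dudleyIntegrand
  positivity

lemma dudleyIntegrand_le_inv {h : ℝ} (hH : 0 ≤ H) (hε : 0 ≤ ε) (hh : 0 < h) :
    dudleyIntegrand H ε h ≤ (2 * h * √(log (1 / h)))⁻¹ :=
  mul_le_of_le_one_left (by positivity) (rpow_div_add_le_one hh.le hε hH)

lemma dudleyIntegrand_le_rpow_sub_one {h : ℝ} (hH : 0 ≤ H) (hε : 0 < ε) (hh : 0 < h)
    (hhε : h ≤ ε) (hεe : ε ≤ exp (-1)) :
    dudleyIntegrand H ε h ≤ h ^ (H - 1) / (2 * ε ^ H) := by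
  have hsqrt : 1 ≤ √(log (1 / h)) := one_le_sqrt_log_one_div hh (hhε.trans hεe)
  calc dudleyIntegrand H ε h
      ≤ (h / ε) ^ H * (2 * h * 1)⁻¹ := by unfold dudleyIntegrand; gcongr; linarith
    _ = h ^ (H - 1) / (2 * ε ^ H) := by
      rw [div_rpow hh.le hε.le, rpow_sub_one hh.ne']
      field_simp

lemma intervalIntegrable_dudleyIntegrand_zero (hH : 0 < H) (hε : 0 < ε) (hεe : ε ≤ exp (-1)) :
    IntervalIntegrable (dudleyIntegrand H ε) volume 0 ε :=
  intervalIntegrable_of_nonneg_of_le hε.le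
    ((intervalIntegral.intervalIntegrable_rpow' (by linarith)).div_const _)
    measurable_dudleyIntegrand fun _ hh =>
      ⟨dudleyIntegrand_nonneg hε.le hh.1, dudleyIntegrand_le_rpow_sub_one hH.le hε hh.1 hh.2 hεe⟩

lemma integral_dudleyIntegrand_zero_le (hH : 0 < H) (hε : 0 < ε) (hεe : ε ≤ exp (-1)) :
    ∫ h in 0..ε, dudleyIntegrand H ε h ≤ (2 * H)⁻¹ := by
  rw [← integral_rpow_sub_one_div hH hε]
  exact integral_mono_on_of_le_Ioo hε.le (intervalIntegrable_dudleyIntegrand_zero hH hε hεe)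
    ((intervalIntegral.intervalIntegrable_rpow' (by linarith)).div_const _)
    fun _ hh => dudleyIntegrand_le_rpow_sub_one hH.le hε hh.1 hh.2.le hεe

lemma intervalIntegrable_dudleyIntegrand_one (hH : 0 ≤ H) (hε : 0 < ε) (hε1 : ε ≤ 1) :
    IntervalIntegrable (dudleyIntegrand H ε) volume ε 1 :=
  intervalIntegrable_of_nonneg_of_le hε1
    (intervalIntegrable_inv_two_mul_sqrt_log_one_div hε hε1 le_rfl)
    measurable_dudleyIntegrand fun _ hh =>
      have hh0 := hε.trans hh.1
      ⟨dudleyIntegrand_nonneg hε.le hh0, dudleyIntegrand_le_inv hH hε.le hh0⟩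

lemma integral_dudleyIntegrand_one_le (hH : 0 ≤ H) (hε : 0 < ε) (hε1 : ε ≤ 1) :
    ∫ h in ε..1, dudleyIntegrand H ε h ≤ √(log (1 / ε)) :=
  calc ∫ h in ε..1, dudleyIntegrand H ε h ≤ ∫ h in ε..1, (2 * h * √(log (1 / h)))⁻¹ :=
        integral_mono_on_of_le_Ioo hε1 (intervalIntegrable_dudleyIntegrand_one hH hε hε1)
          (intervalIntegrable_inv_two_mul_sqrt_log_one_div hε hε1 le_rfl)
          fun _ hh => dudleyIntegrand_le_inv hH hε.le (hε.trans hh.1)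
    _ = √(log (1 / ε)) := by
      rw [integral_inv_two_mul_sqrt_log_one_div hε hε1 le_rfl, div_one, log_one, sqrt_zero,
        sub_zero]

end dudleyIntegrand

/-- second assertion of Lemma 1, entropy integral bound: for `H ∈ (0,1)`
there is `c > 0` with `∫₀¹ (h/(h+ε))^H (2h√(log(1/h)))⁻¹ dh ≤ c √(log(1/ε))` for all
`ε ∈ (0, 1/4]`. -/
theorem statement16 (H : ℝ) (hH : H ∈ Set.Ioo (0:ℝ) 1) :
    ∃ c > (0:ℝ), ∀ ε : ℝ, ε ∈ Set.Ioc (0:ℝ) (1/4) →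
      (∫ h in (0:ℝ)..1,
          (h / (h + ε)) ^ H * (2 * h * Real.sqrt (Real.log (1/h)))⁻¹)
        ≤ c * Real.sqrt (Real.log (1/ε)) := by
  obtain ⟨hH0, -⟩ := hH
  refine ⟨1 + (2 * H)⁻¹, by positivity, fun ε ⟨hε0, hε4⟩ => ?_⟩
  have hεe : ε ≤ exp (-1) := by
    refine hε4.trans ?_
    rw [exp_neg, one_div]
    exact inv_anti₀ (exp_pos 1) (exp_one_lt_d9.trans (by norm_num)).le
  have hε1 : ε ≤ 1 := by linarith
  change ∫ h in 0..1, dudleyIntegrand H ε h ≤ _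
  rw [← integral_add_adjacent_intervals (intervalIntegrable_dudleyIntegrand_zero hH0 hε0 hεe)
    (intervalIntegrable_dudleyIntegrand_one hH0.le hε0 hε1)]
  nlinarith [integral_dudleyIntegrand_zero_le hH0 hε0 hεe,
    integral_dudleyIntegrand_one_le hH0.le hε0 hε1, one_le_sqrt_log_one_div hε0 hεe,
    inv_pos.2 (by positivity : 0 < 2 * H)]
end
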